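/- arXiv:1303.5798 — 10 statements merged into one kernel-verified Lean document; each statement's English description precedes it below -/
import Mathlib

section
/- If T is α-admissible and α-contractive of Meir–Keeler type, and x, y ∈ X satisfy α(x,y) ≥ 1, then d(Tⁿx, Tⁿy) → 0 as n → ∞. -/
open Filter

/-! A Meir–Keeler condition restricted to the pairs with `α ≥ 1` makes `T` non-expansive on them,
so along the orbit of such a pair the distances decrease to some limit `L`. If `L > 0`, the
condition at `ε = L` pushes some distance strictly below `L`, a contradiction. -/

theorem tendsto_zero_of_antitone_of_meirKeeler {d : ℕ → ℝ} (hd : ∀ n, 0 ≤ d n)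
    (hanti : Antitone d)
    (hMK : ∀ ε > (0 : ℝ), ∃ δ > (0 : ℝ), ∀ n, ε ≤ d n → d n < ε + δ → d (n + 1) < ε) :
    Tendsto d atTop (nhds 0) := by
  have hbdd : BddBelow (Set.range d) := ⟨0, Set.forall_mem_range.2 hd⟩
  have hlim : Tendsto d atTop (nhds (⨅ n, d n)) := tendsto_atTop_ciInf hanti hbdd
  suffices hL : ⨅ n, d n = 0 by rwa [hL] at hlim
  refine le_antisymm (not_lt.1 fun hLpos => ?_) (le_ciInf hd)
  obtain ⟨δ, hδ, hstep⟩ := hMK _ hLpos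
  obtain ⟨n, hn⟩ := exists_lt_of_ciInf_lt (lt_add_of_pos_right (⨅ n, d n) hδ)
  exact (hstep n (ciInf_le hbdd n) hn).not_ge (ciInf_le hbdd (n + 1))

theorem one_le_iterate_of_admissible {X : Type*} {T : X → X} {α : X → X → ℝ}
    (hadm : ∀ x y : X, 1 ≤ α x y → 1 ≤ α (T x) (T y))
    {x y : X} (hxy : 1 ≤ α x y) (n : ℕ) : 1 ≤ α (T^[n] x) (T^[n] y) := by
  induction n with
  | zero => exact hxy
  | succ n ih =>
    simpa only [Function.iterate_succ_apply'] using hadm _ _ ih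

theorem dist_map_lt_of_meirKeeler {X : Type*} [PseudoMetricSpace X] {T : X → X}
    {α : X → X → ℝ} {ε δ : ℝ}
    (hMK : ∀ x y : X, ε ≤ dist x y → dist x y < ε + δ → α x y * dist (T x) (T y) < ε)
    {x y : X} (hxy : 1 ≤ α x y) (hε : ε ≤ dist x y) (hδ : dist x y < ε + δ) :
    dist (T x) (T y) < ε :=
  calc dist (T x) (T y) ≤ α x y * dist (T x) (T y) := le_mul_of_one_le_left dist_nonneg hxy
    _ < ε := hMK x y hε hδ

theorem dist_map_le_of_meirKeeler {X : Type*} [MetricSpace X] {T : X → X} {α : X → X → ℝ}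
    (hMK : ∀ ε > (0:ℝ), ∃ δ > (0:ℝ), ∀ x y : X,
      ε ≤ dist x y → dist x y < ε + δ → α x y * dist (T x) (T y) < ε)
    {x y : X} (hxy : 1 ≤ α x y) : dist (T x) (T y) ≤ dist x y := by
  rcases eq_or_ne x y with rfl | hne
  · simp
  obtain ⟨δ, hδ, hMKδ⟩ := hMK _ (dist_pos.2 hne)
  exact (dist_map_lt_of_meirKeeler hMKδ hxy le_rfl (lt_add_of_pos_right _ hδ)).le

theorem stmt_3_general {X : Type*} [MetricSpace X] (T : X → X) (α : X → X → ℝ)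
    (hadm : ∀ x y : X, 1 ≤ α x y → 1 ≤ α (T x) (T y))
    (hMK : ∀ ε > (0:ℝ), ∃ δ > (0:ℝ), ∀ x y : X,
      ε ≤ dist x y → dist x y < ε + δ → α x y * dist (T x) (T y) < ε)
    (x y : X) (hxy : 1 ≤ α x y) :
    Tendsto (fun n : ℕ => dist (T^[n] x) (T^[n] y)) atTop (nhds 0) := by
  have horbit := one_le_iterate_of_admissible hadm hxy
  refine tendsto_zero_of_antitone_of_meirKeeler (fun _ => dist_nonneg) ?_ ?_
  · refine antitone_nat_of_succ_le fun n => ?_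
    simpa only [Function.iterate_succ_apply'] using dist_map_le_of_meirKeeler hMK (horbit n)
  · intro ε hε
    obtain ⟨δ, hδ, hMKδ⟩ := hMK ε hε
    refine ⟨δ, hδ, fun n hεn hnδ => ?_⟩
    simpa only [Function.iterate_succ_apply'] using
      dist_map_lt_of_meirKeeler hMKδ (horbit n) hεn hnδ

theorem stmt_3 {X : Type*} [MetricSpace X] (T : X → X) (α : X → X → ℝ)
    (hα : ∀ x y, 0 ≤ α x y)
    (hadm : ∀ x y : X, 1 ≤ α x y → 1 ≤ α (T x) (T y))
    (hMK : ∀ ε > (0:ℝ), ∃ δ > (0:ℝ), ∀ x y : X,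
      ε ≤ dist x y → dist x y < ε + δ → α x y * dist (T x) (T y) < ε)
    (x y : X) (hxy : 1 ≤ α x y) :
    Tendsto (fun n : ℕ => dist (T^[n] x) (T^[n] y)) atTop (nhds 0) :=
  stmt_3_general T α hadm hMK x y hxy
end

section
/- Let (X,d) be a complete metric space, α : X × X → [0,∞) be N-transitive for some N ≥ 1, and T : X → X an α-contractive mapping of Meir–Keeler type that is α-admissible and α-orbitally continuous. If there exists x₀ ∈ X with α(x₀, Tx₀) ≥ 1, then T has a fixed point. -/
/-!
Along the orbit `x n = Tⁿ x₀` admissibility gives `α (x n) (x (n + 1)) ≥ 1`, so the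
Meir–Keeler condition makes the steps `d (x n) (x (n + 1))` decrease to `0`. Transitivity
upgrades this to `α (x m) (x (m + 1 + j * N)) ≥ 1`, and for `ε > 0` an induction on `j` keeps
`d (x m) (x (m + 1 + j * N)) < ε + δ` for all large `m`: while this distance is at least `ε`
the contraction brings the next one back below `ε`. Hence the orbit is Cauchy, and orbital
continuity forces its limit to be fixed.
-/

open Filter Topology

section

variable {X : Type*}

theorem iterate_rel_of_admissible {R : X → X → Prop} {T : X → X}
    (hadm : ∀ x y, R x y → R (T x) (T y)) {x₀ : X} (hx₀ : R x₀ (T x₀)) (n : ℕ) :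
    R (T^[n] x₀) (T^[n + 1] x₀) := by
  induction n with
  | zero => exact hx₀
  | succ n ih =>
    simpa only [Function.iterate_succ_apply'] using hadm _ _ ih

theorem rel_add_one_add_mul {R : X → X → Prop} {N : ℕ}
    (htrans : ∀ z : ℕ → X, (∀ i ≤ N, R (z i) (z (i + 1))) → R (z 0) (z (N + 1)))
    {x : ℕ → X} (hchain : ∀ n, R (x n) (x (n + 1))) (m j : ℕ) :
    R (x m) (x (m + 1 + j * N)) := by
  induction j with
  | zero => simpa using hchain m
  | succ j ih =>
    set k := m + 1 + j * N
    have h := htrans (fun i => if i = 0 then x m else x (k + (i - 1))) fun i _ => by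
      rcases i with _ | i
      · simpa using ih
      · simpa [Nat.add_assoc] using hchain (k + i)
    rw [show m + 1 + (j + 1) * N = k + N by ring]
    simpa using h

variable [MetricSpace X]

def MeirKeelerOn (R : X → X → Prop) (T : X → X) : Prop :=
  ∀ ε > (0 : ℝ), ∃ δ > (0 : ℝ), ∀ x y : X,
    R x y → ε ≤ dist x y → dist x y < ε + δ → dist (T x) (T y) < ε

theorem meirKeelerOn_of_alpha {T : X → X} {α : X → X → ℝ}
    (hMK : ∀ ε > (0 : ℝ), ∃ δ > (0 : ℝ), ∀ x y : X,
      ε ≤ dist x y → dist x y < ε + δ → α x y * dist (T x) (T y) < ε) :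
    MeirKeelerOn (fun x y => 1 ≤ α x y) T := by
  intro ε hε
  obtain ⟨δ, hδ, h⟩ := hMK ε hε
  exact ⟨δ, hδ, fun x y hxy h₁ h₂ =>
    (le_mul_of_one_le_left dist_nonneg hxy).trans_lt (h x y h₁ h₂)⟩

theorem dist_add_le_mul_of_dist_succ_le {x : ℕ → X} {p : ℕ} {η : ℝ}
    (hη : ∀ i ≥ p, dist (x i) (x (i + 1)) ≤ η) (k : ℕ) :
    dist (x p) (x (p + k)) ≤ k * η := by
  have h := dist_le_Ico_sum_of_dist_le (f := x) (d := fun _ => η) (Nat.le_add_right p k)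
    fun {i} hpi _ => hη i hpi
  simpa using h

namespace MeirKeelerOn

variable {R : X → X → Prop} {T : X → X}

theorem dist_map_le (hT : MeirKeelerOn R T) {x y : X} (hxy : R x y) :
    dist (T x) (T y) ≤ dist x y := by
  rcases (dist_nonneg (x := x) (y := y)).eq_or_lt with h | h
  · simp [dist_eq_zero.mp h.symm]
  · obtain ⟨δ, hδ, hT⟩ := hT _ h
    exact (hT x y hxy le_rfl (by linarith)).le

variable {x : ℕ → X}

theorem tendsto_dist_succ (hT : MeirKeelerOn R T) (hx : ∀ n, x (n + 1) = T (x n))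
    (hchain : ∀ n, R (x n) (x (n + 1))) :
    Tendsto (fun n => dist (x n) (x (n + 1))) atTop (𝓝 0) := by
  set d := fun n => dist (x n) (x (n + 1))
  have hanti : Antitone d := antitone_nat_of_succ_le fun n => by
    simpa only [d, hx] using hT.dist_map_le (hchain n)
  have hlim := tendsto_atTop_ciInf hanti ⟨0, by rintro _ ⟨n, rfl⟩; exact dist_nonneg⟩
  set r := ⨅ n, d n
  have hr : ∀ n, r ≤ d n := hanti.le_of_tendsto hlim
  have hr₀ : 0 ≤ r := le_ciInf fun n => dist_nonneg
  rcases hr₀.eq_or_lt with h | hr₀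
  · rwa [← h] at hlim
  -- once `d n < r + δ`, the contraction pushes `d (n + 1)` below the infimum `r`
  obtain ⟨δ, hδ, hTr⟩ := hT r hr₀
  obtain ⟨n, hn⟩ := (hlim.eventually (gt_mem_nhds (lt_add_of_pos_right r hδ))).exists
  have := hTr _ _ (hchain n) (hr n) hn
  rw [← hx, ← hx] at this
  exact absurd (hr (n + 1)) (not_le.mpr this)

theorem dist_add_one_add_mul_lt (hx : ∀ n, x (n + 1) = T (x n)) {N : ℕ} (hN : 1 ≤ N)
    (hR : ∀ m j, R (x m) (x (m + 1 + j * N))) {ε δ η : ℝ} (hε : 0 ≤ ε)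
    (hT : ∀ a b, R a b → ε ≤ dist a b → dist a b < ε + δ → dist (T a) (T b) < ε)
    (hηδ : N * η ≤ δ) {n₀ : ℕ} (hsteps : ∀ i ≥ n₀, dist (x i) (x (i + 1)) < η)
    {m : ℕ} (hm : n₀ ≤ m) (j : ℕ) :
    dist (x m) (x (m + 1 + j * N)) < ε + N * η := by
  obtain ⟨M, rfl⟩ := Nat.exists_eq_add_of_le' hN
  have hsmall : ∀ i ≥ n₀, ∀ k : ℕ, dist (x i) (x (i + k)) ≤ k * η := fun i hi =>
    dist_add_le_mul_of_dist_succ_le fun l hl => (hsteps l (hi.trans hl)).le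
  have hη : 0 < η := dist_nonneg.trans_lt (hsteps m hm)
  push_cast at hηδ ⊢
  induction j with
  | zero => simpa using (hsteps m hm).trans_le (by nlinarith)
  | succ j ih =>
    set k := m + 1 + j * (M + 1)
    have hk : m + 1 + (j + 1) * (M + 1) = k + 1 + M := by ring
    rw [hk]
    rcases lt_or_ge (dist (x m) (x k)) ε with hlt | hge
    · have := hsmall k (by omega) (M + 1)
      push_cast at this
      rw [show k + 1 + M = k + (M + 1) by ring]
      linarith [dist_triangle (x m) (x k) (x (k + (M + 1)))]
    · have hmid : dist (x (m + 1)) (x (k + 1)) < ε := by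
        rw [hx, hx]; exact hT _ _ (hR m j) hge (by linarith)
      have := hsmall (k + 1) (by omega) M
      linarith [hsteps m hm, dist_triangle4 (x m) (x (m + 1)) (x (k + 1)) (x (k + 1 + M))]

theorem cauchySeq (hT : MeirKeelerOn R T) (hx : ∀ n, x (n + 1) = T (x n)) {N : ℕ}
    (hN : 1 ≤ N) (hR : ∀ m j, R (x m) (x (m + 1 + j * N))) : CauchySeq x := by
  rw [Metric.cauchySeq_iff']
  intro ε hε
  obtain ⟨δ, hδ, hTε⟩ := hT (ε / 3) (by positivity)
  have hNpos : (0 : ℝ) < N := by exact_mod_cast hN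
  set η := min δ (ε / 3) / N
  have hNη : N * η = min δ (ε / 3) := mul_div_cancel₀ _ hNpos.ne'
  have hη : 0 < η := by positivity
  obtain ⟨n₀, hn₀⟩ := eventually_atTop.mp <|
    (hT.tendsto_dist_succ hx fun n => by simpa using hR n 0).eventually (gt_mem_nhds hη)
  refine ⟨n₀, fun n hn => ?_⟩
  rcases hn.eq_or_lt with rfl | hlt
  · simpa using hε
  obtain ⟨j, r, hr, rfl⟩ : ∃ j r, r < N ∧ n = n₀ + 1 + j * N + r :=
    ⟨(n - n₀ - 1) / N, (n - n₀ - 1) % N, Nat.mod_lt _ (by omega), by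
      have := Nat.div_add_mod' (n - n₀ - 1) N; omega⟩
  have h₁ := dist_add_one_add_mul_lt hx hN hR (by positivity) hTε
    (hNη.trans_le (min_le_left _ _)) hn₀ le_rfl j
  have h₂ := dist_add_le_mul_of_dist_succ_le (x := x) (p := n₀ + 1 + j * N)
    (fun i hi => (hn₀ i (by omega)).le) r
  have h₃ : (r : ℝ) * η ≤ N * η := by gcongr
  rw [dist_comm]
  linarith [dist_triangle (x n₀) (x (n₀ + 1 + j * N)) (x (n₀ + 1 + j * N + r)),
    min_le_right δ (ε / 3)]

end MeirKeelerOn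

end

theorem stmt_4_general {X : Type*} [MetricSpace X] [CompleteSpace X]
    (T : X → X) (α : X → X → ℝ) (N : ℕ) (hN : 1 ≤ N)
    (htrans : ∀ z : ℕ → X, (∀ i ≤ N, 1 ≤ α (z i) (z (i + 1))) → 1 ≤ α (z 0) (z (N + 1)))
    (hMK : ∀ ε > (0:ℝ), ∃ δ > (0:ℝ), ∀ x y : X,
      ε ≤ dist x y → dist x y < ε + δ → α x y * dist (T x) (T y) < ε)
    (hadm : ∀ x y : X, 1 ≤ α x y → 1 ≤ α (T x) (T y))
    (horb : ∀ (x0 x : X), (∀ n : ℕ, 1 ≤ α (T^[n] x0) (T^[n + 1] x0)) →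
      Tendsto (fun n : ℕ => T^[n] x0) atTop (nhds x) →
      ∃ φ : ℕ → ℕ, StrictMono φ ∧
        Tendsto (fun k : ℕ => T (T^[φ k] x0)) atTop (nhds (T x)))
    (x₀ : X) (hx₀ : 1 ≤ α x₀ (T x₀)) :
    ∃ xs : X, T xs = xs := by
  have hx : ∀ n, T^[n + 1] x₀ = T (T^[n] x₀) := fun n => Function.iterate_succ_apply' T n x₀
  have hchain := iterate_rel_of_admissible hadm hx₀
  have hcauchy := (meirKeelerOn_of_alpha hMK).cauchySeq hx hN
    (rel_add_one_add_mul (R := fun x y => 1 ≤ α x y) htrans hchain)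
  obtain ⟨p, hp⟩ := cauchySeq_tendsto_of_complete hcauchy
  obtain ⟨φ, hφ, hTφ⟩ := horb x₀ p hchain hp
  have hp' : Tendsto (fun k => T (T^[φ k] x₀)) atTop (𝓝 p) := by
    simpa only [hx, Function.comp_def] using
      ((tendsto_add_atTop_iff_nat 1).mpr hp).comp hφ.tendsto_atTop
  exact ⟨p, tendsto_nhds_unique hTφ hp'⟩

theorem stmt_4 {X : Type*} [MetricSpace X] [CompleteSpace X]
    (T : X → X) (α : X → X → ℝ) (N : ℕ) (hN : 1 ≤ N)
    (hα : ∀ x y, 0 ≤ α x y)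
    (htrans : ∀ z : ℕ → X, (∀ i ≤ N, 1 ≤ α (z i) (z (i + 1))) → 1 ≤ α (z 0) (z (N + 1)))
    (hMK : ∀ ε > (0:ℝ), ∃ δ > (0:ℝ), ∀ x y : X,
      ε ≤ dist x y → dist x y < ε + δ → α x y * dist (T x) (T y) < ε)
    (hadm : ∀ x y : X, 1 ≤ α x y → 1 ≤ α (T x) (T y))
    (horb : ∀ (x0 x : X), (∀ n : ℕ, 1 ≤ α (T^[n] x0) (T^[n + 1] x0)) →
      Tendsto (fun n : ℕ => T^[n] x0) atTop (nhds x) →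
      ∃ φ : ℕ → ℕ, StrictMono φ ∧
        Tendsto (fun k : ℕ => T (T^[φ k] x0)) atTop (nhds (T x)))
    (x₀ : X) (hx₀ : 1 ≤ α x₀ (T x₀)) :
    ∃ xs : X, T xs = xs :=
  stmt_4_general T α N hN htrans hMK hadm horb x₀ hx₀
end

section
/- Let (X,d) be a complete metric space, α : X × X → [0,∞) be N-transitive for some N ≥ 1, and T : X → X an α-contractive mapping of Meir–Keeler type that is α-admissible. If there exists x₀ ∈ X with α(x₀, Tx₀) ≥ 1 and (X,d) is (T,α)-regular, then T has a fixed point. -/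
/-!
Along the orbit `xₙ = Tⁿ x₀` admissibility gives `α(xₙ, xₙ₊₁) ≥ 1`, so the Meir–Keeler condition
makes `T` nonexpansive on consecutive points and the gaps `d(xₙ, xₙ₊₁)` decrease to `0`.
`N`-transitivity upgrades this to `α(xₙ, xₘ) ≥ 1` whenever `m ≡ n + 1 (mod N)`, which is enough to
run the Meir–Keeler Cauchy argument along those indices; the points in between are controlled by
at most `N` small gaps. Regularity then lets the contraction pass to the limit.
-/

open Filter Topology

def IsAlphaMeirKeeler {X : Type*} [MetricSpace X] (T : X → X) (α : X → X → ℝ) : Prop :=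
  ∀ ε > (0:ℝ), ∃ δ > (0:ℝ), ∀ x y : X,
    ε ≤ dist x y → dist x y < ε + δ → α x y * dist (T x) (T y) < ε

theorem tendsto_nhds_zero_of_antitone_of_lt {D : ℕ → ℝ} (hD : Antitone D) (h0 : ∀ n, 0 ≤ D n)
    (hstep : ∀ ε > 0, ∃ δ > 0, ∀ n, D n < ε + δ → D (n + 1) < ε) :
    Tendsto D atTop (𝓝 0) := by
  have hbdd : BddBelow (Set.range D) := ⟨0, by rintro _ ⟨n, rfl⟩; exact h0 n⟩
  suffices hinf : ⨅ n, D n = 0 from hinf ▸ tendsto_atTop_ciInf hD hbdd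
  refine le_antisymm (not_lt.1 fun hpos => ?_) (le_ciInf h0)
  obtain ⟨δ, hδ, hδstep⟩ := hstep _ hpos
  obtain ⟨n, hn⟩ := exists_lt_of_ciInf_lt (lt_add_of_pos_right (⨅ n, D n) hδ)
  exact (hδstep n hn).not_ge (ciInf_le hbdd (n + 1))

theorem one_le_alpha_iterate_succ {X : Type*} {T : X → X} {α : X → X → ℝ}
    (hadm : ∀ x y, 1 ≤ α x y → 1 ≤ α (T x) (T y)) {x₀ : X} (hx₀ : 1 ≤ α x₀ (T x₀)) (n : ℕ) :
    1 ≤ α (T^[n] x₀) (T^[n + 1] x₀) := by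
  induction n with
  | zero => exact hx₀
  | succ n ih =>
    simp only [Function.iterate_succ_apply'] at ih ⊢
    exact hadm _ _ ih

theorem one_le_alpha_add_one_add_mul {X : Type*} {α : X → X → ℝ} {N : ℕ}
    (htrans : ∀ z : ℕ → X, (∀ i ≤ N, 1 ≤ α (z i) (z (i + 1))) → 1 ≤ α (z 0) (z (N + 1)))
    {u : ℕ → X} (hchain : ∀ n, 1 ≤ α (u n) (u (n + 1))) (n k : ℕ) :
    1 ≤ α (u n) (u (n + 1 + k * N)) := by
  induction k with
  | zero => simpa using hchain n
  | succ k ih =>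
    -- the chain `u n, u (n + 1 + k N), u (n + 2 + k N), …, u (n + 1 + (k + 1) N)`
    have h := htrans (Function.update (fun i => u (n + k * N + i)) 0 (u n)) fun i hi => by
      rcases i with _ | i
      · simpa [add_right_comm n 1] using ih
      · simpa [← add_assoc] using hchain (n + k * N + (i + 1))
    simp only [Function.update_self, Function.update_of_ne (Nat.succ_ne_zero N)] at h
    convert h using 3
    rw [Nat.succ_mul]
    omega

section

variable {X : Type*} [MetricSpace X] {T : X → X} {α : X → X → ℝ} {u : ℕ → X}

theorem dist_le_mul_of_dist_succ_le {η : ℝ} {a : ℕ} (hη : ∀ m ≥ a, dist (u m) (u (m + 1)) ≤ η)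
    (r : ℕ) : dist (u a) (u (a + r)) ≤ r * η := by
  induction r with
  | zero => simp
  | succ r ih =>
    calc dist (u a) (u (a + (r + 1)))
        ≤ dist (u a) (u (a + r)) + dist (u (a + r)) (u (a + r + 1)) := dist_triangle _ _ _
      _ ≤ r * η + η := add_le_add ih (hη _ (Nat.le_add_right a r))
      _ = (r + 1 : ℕ) * η := by push_cast; ring

theorem dist_add_one_add_mul_lt {N n₀ : ℕ} (hN : 1 ≤ N)
    (hu : ∀ n, u (n + 1) = T (u n)) (hgap : ∀ n k, 1 ≤ α (u n) (u (n + 1 + k * N)))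
    {ε δ η : ℝ} (hε : 0 < ε)
    (hstep : ∀ a b, 1 ≤ α a b → dist a b < ε + δ → dist (T a) (T b) < ε)
    (hη : ∀ m ≥ n₀, dist (u m) (u (m + 1)) ≤ η) (hηδ : N * η < δ) (k : ℕ) :
    dist (u n₀) (u (n₀ + 1 + k * N)) < ε + δ := by
  obtain ⟨r, rfl⟩ := Nat.exists_eq_add_of_le' hN
  have hη₀ : η ≤ (r + 1 : ℕ) * η := le_mul_of_one_le_left (dist_nonneg.trans (hη n₀ le_rfl))
    (by simp)
  induction k with
  | zero => simpa using (hη n₀ le_rfl).trans_lt (by linarith)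
  | succ k ih =>
    -- one contraction step, then `N` gaps of size at most `η`
    have hmid : dist (u (n₀ + 1)) (u (n₀ + 1 + k * (r + 1) + 1)) < ε := by
      rw [hu n₀, hu (n₀ + 1 + k * (r + 1))]
      exact hstep _ _ (hgap n₀ k) ih
    have htail := dist_le_mul_of_dist_succ_le (a := n₀ + 1 + k * (r + 1) + 1)
      (fun m hm => hη m (by omega)) r
    rw [show n₀ + 1 + k * (r + 1) + 1 + r = n₀ + 1 + (k + 1) * (r + 1) by ring] at htail
    calc dist (u n₀) (u (n₀ + 1 + (k + 1) * (r + 1)))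
        ≤ dist (u n₀) (u (n₀ + 1)) + dist (u (n₀ + 1)) (u (n₀ + 1 + k * (r + 1) + 1))
          + dist (u (n₀ + 1 + k * (r + 1) + 1)) (u (n₀ + 1 + (k + 1) * (r + 1))) :=
          dist_triangle4 _ _ _ _
      _ < η + ε + r * η := by linarith [hη n₀ le_rfl]
      _ = ε + (r + 1 : ℕ) * η := by push_cast; ring
      _ < ε + δ := by linarith

namespace IsAlphaMeirKeeler

theorem dist_map_le (h : IsAlphaMeirKeeler T α) {a b : X} (hab : 1 ≤ α a b) :
    dist (T a) (T b) ≤ dist a b := by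
  rcases (dist_nonneg : 0 ≤ dist a b).eq_or_lt with hd | hd
  · simp [dist_eq_zero.1 hd.symm]
  · obtain ⟨δ, hδ, hMK⟩ := h _ hd
    exact (le_mul_of_one_le_left dist_nonneg hab).trans (hMK a b le_rfl (by linarith)).le

theorem exists_dist_map_lt (h : IsAlphaMeirKeeler T α) {ε : ℝ} (hε : 0 < ε) :
    ∃ δ > 0, δ ≤ ε ∧ ∀ a b, 1 ≤ α a b → dist a b < ε + δ → dist (T a) (T b) < ε := by
  obtain ⟨δ, hδ, hMK⟩ := h ε hε
  refine ⟨min δ ε, lt_min hδ hε, min_le_right _ _, fun a b hab hlt => ?_⟩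
  rcases lt_or_ge (dist a b) ε with hlt' | hge
  · exact (h.dist_map_le hab).trans_lt hlt'
  · refine (le_mul_of_one_le_left dist_nonneg hab).trans_lt (hMK a b hge ?_)
    linarith [min_le_left δ ε]

theorem tendsto_dist_succ (h : IsAlphaMeirKeeler T α) (hu : ∀ n, u (n + 1) = T (u n))
    (hchain : ∀ n, 1 ≤ α (u n) (u (n + 1))) :
    Tendsto (fun n => dist (u n) (u (n + 1))) atTop (𝓝 0) := by
  refine tendsto_nhds_zero_of_antitone_of_lt (antitone_nat_of_succ_le fun n => ?_)
    (fun _ => dist_nonneg) fun ε hε => ?_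
  · have h' := h.dist_map_le (hchain n)
    rwa [← hu, ← hu] at h'
  · obtain ⟨δ, hδ, -, hδstep⟩ := h.exists_dist_map_lt hε
    refine ⟨δ, hδ, fun n hn => ?_⟩
    have h' := hδstep _ _ (hchain n) hn
    rwa [← hu, ← hu] at h'

theorem cauchySeq (h : IsAlphaMeirKeeler T α) {N : ℕ} (hN : 1 ≤ N)
    (hu : ∀ n, u (n + 1) = T (u n)) (hgap : ∀ n k, 1 ≤ α (u n) (u (n + 1 + k * N)))
    (hD : Tendsto (fun n => dist (u n) (u (n + 1))) atTop (𝓝 0)) : CauchySeq u := by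
  refine Metric.cauchySeq_iff'.2 fun ε hε => ?_
  have hε3 : 0 < ε / 3 := by positivity
  obtain ⟨δ, hδ, hδε, hstep⟩ := h.exists_dist_map_lt hε3
  have hNpos : (0 : ℝ) < N := by exact_mod_cast hN
  set η := δ / (2 * N)
  have hNη : N * η = δ / 2 := by simp only [η]; field_simp
  obtain ⟨n₀, hn₀⟩ := eventually_atTop.1 (hD.eventually (ge_mem_nhds (by positivity : 0 < η)))
  refine ⟨n₀, fun n hn => ?_⟩
  rcases hn.eq_or_lt with rfl | hlt
  · simpa using hε
  obtain ⟨m, rfl⟩ : ∃ m, n = n₀ + 1 + m := ⟨n - (n₀ + 1), by omega⟩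
  have hhead := dist_add_one_add_mul_lt hN hu hgap hε3 hstep hn₀
    (by linarith) (m / N)
  have htail := dist_le_mul_of_dist_succ_le (a := n₀ + 1 + m / N * N)
    (fun k hk => hn₀ k (by omega)) (m % N)
  rw [add_assoc (n₀ + 1), Nat.div_add_mod'] at htail
  have hmod : (m % N : ℕ) * η ≤ N * η :=
    mul_le_mul_of_nonneg_right (by exact_mod_cast (Nat.mod_lt m hN).le) (by positivity)
  rw [dist_comm]
  linarith [dist_triangle (u n₀) (u (n₀ + 1 + m / N * N)) (u (n₀ + 1 + m))]

theorem map_eq_of_tendsto (h : IsAlphaMeirKeeler T α) (hu : ∀ n, u (n + 1) = T (u n)) {x : X}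
    (hx : Tendsto u atTop (𝓝 x)) {φ : ℕ → ℕ} (hφ : StrictMono φ)
    (hφα : ∀ k, 1 ≤ α (u (φ k)) x) : T x = x := by
  have hsucc : Tendsto (fun k => u (φ k + 1)) atTop (𝓝 x) :=
    hx.comp ((tendsto_add_atTop_nat 1).comp hφ.tendsto_atTop)
  refine tendsto_nhds_unique (tendsto_iff_dist_tendsto_zero.2 ?_) hsucc
  refine squeeze_zero (fun _ => dist_nonneg) (fun k => ?_)
    ((tendsto_iff_dist_tendsto_zero.1 hx).comp hφ.tendsto_atTop)
  rw [hu]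
  exact h.dist_map_le (hφα k)

end IsAlphaMeirKeeler

end

theorem stmt_5_general {X : Type*} [MetricSpace X] [CompleteSpace X]
    (T : X → X) (α : X → X → ℝ) (N : ℕ) (hN : 1 ≤ N)
    (htrans : ∀ z : ℕ → X, (∀ i ≤ N, 1 ≤ α (z i) (z (i + 1))) → 1 ≤ α (z 0) (z (N + 1)))
    (hMK : ∀ ε > (0:ℝ), ∃ δ > (0:ℝ), ∀ x y : X,
      ε ≤ dist x y → dist x y < ε + δ → α x y * dist (T x) (T y) < ε)
    (hadm : ∀ x y : X, 1 ≤ α x y → 1 ≤ α (T x) (T y))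
    (hreg : ∀ (x0 x : X), (∀ n : ℕ, 1 ≤ α (T^[n] x0) (T^[n + 1] x0)) →
      Tendsto (fun n : ℕ => T^[n] x0) atTop (nhds x) →
      ∃ φ : ℕ → ℕ, StrictMono φ ∧ ∀ k : ℕ, 1 ≤ α (T^[φ k] x0) x)
    (x₀ : X) (hx₀ : 1 ≤ α x₀ (T x₀)) :
    ∃ xs : X, T xs = xs := by
  have hT : IsAlphaMeirKeeler T α := hMK
  have hu : ∀ n, T^[n + 1] x₀ = T (T^[n] x₀) := fun n => Function.iterate_succ_apply' T n x₀
  have hchain := one_le_alpha_iterate_succ hadm hx₀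
  obtain ⟨xs, hxs⟩ := cauchySeq_tendsto_of_complete <|
    hT.cauchySeq hN hu (one_le_alpha_add_one_add_mul htrans hchain) (hT.tendsto_dist_succ hu hchain)
  obtain ⟨φ, hφ, hφα⟩ := hreg x₀ xs hchain hxs
  exact ⟨xs, hT.map_eq_of_tendsto hu hxs hφ hφα⟩

theorem stmt_5 {X : Type*} [MetricSpace X] [CompleteSpace X]
    (T : X → X) (α : X → X → ℝ) (N : ℕ) (hN : 1 ≤ N)
    (hα : ∀ x y, 0 ≤ α x y)
    (htrans : ∀ z : ℕ → X, (∀ i ≤ N, 1 ≤ α (z i) (z (i + 1))) → 1 ≤ α (z 0) (z (N + 1)))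
    (hMK : ∀ ε > (0:ℝ), ∃ δ > (0:ℝ), ∀ x y : X,
      ε ≤ dist x y → dist x y < ε + δ → α x y * dist (T x) (T y) < ε)
    (hadm : ∀ x y : X, 1 ≤ α x y → 1 ≤ α (T x) (T y))
    (hreg : ∀ (x0 x : X), (∀ n : ℕ, 1 ≤ α (T^[n] x0) (T^[n + 1] x0)) →
      Tendsto (fun n : ℕ => T^[n] x0) atTop (nhds x) →
      ∃ φ : ℕ → ℕ, StrictMono φ ∧ ∀ k : ℕ, 1 ≤ α (T^[φ k] x0) x)
    (x₀ : X) (hx₀ : 1 ≤ α x₀ (T x₀)) :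
    ∃ xs : X, T xs = xs :=
  stmt_5_general T α N hN htrans hMK hadm hreg x₀ hx₀
end

section
/- Let (X,d) be a complete metric space, α : X × X → [0,∞) be N-transitive for some N ≥ 1, and T : X → X an α-admissible, α-orbitally continuous, α-contractive mapping of Meir–Keeler type with α(x₀, Tx₀) ≥ 1 for some x₀. If X is α-connected, then T has a unique fixed point x*, and Tⁿx → x* as n → ∞ for every x ∈ X. -/
open Filter

theorem stmt_6 {X : Type*} [MetricSpace X] [CompleteSpace X]
    (T : X → X) (α : X → X → ℝ) (N : ℕ) (hN : 1 ≤ N)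
    (hα : ∀ x y, 0 ≤ α x y)
    (htrans : ∀ z : ℕ → X, (∀ i ≤ N, 1 ≤ α (z i) (z (i + 1))) → 1 ≤ α (z 0) (z (N + 1)))
    (hMK : ∀ ε > (0:ℝ), ∃ δ > (0:ℝ), ∀ x y : X,
      ε ≤ dist x y → dist x y < ε + δ → α x y * dist (T x) (T y) < ε)
    (hadm : ∀ x y : X, 1 ≤ α x y → 1 ≤ α (T x) (T y))
    (horb : ∀ (x0 x : X), (∀ n : ℕ, 1 ≤ α (T^[n] x0) (T^[n + 1] x0)) →
      Tendsto (fun n : ℕ => T^[n] x0) atTop (nhds x) →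
      ∃ φ : ℕ → ℕ, StrictMono φ ∧
        Tendsto (fun k : ℕ => T (T^[φ k] x0)) atTop (nhds (T x)))
    (x₀ : X) (hx₀ : 1 ≤ α x₀ (T x₀))
    (hconn : ∀ x y : X, x ≠ y → ∃ (n : ℕ) (z : ℕ → X), z 0 = x ∧ z n = y ∧
      ∀ i < n, 1 ≤ α (z i) (z (i + 1)) ∨ 1 ≤ α (z (i + 1)) (z i)) :
    ∃ xs : X, T xs = xs ∧ (∀ y : X, T y = y → y = xs) ∧
      ∀ x : X, Tendsto (fun n : ℕ => T^[n] x) atTop (nhds xs) := by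
  obtain ⟨N', rfl⟩ : ∃ N', N = N' + 1 := ⟨N - 1, by omega⟩
  -- basic consequence of MK: nonexpansive on α ≥ 1 pairs
  have mkle : ∀ a b : X, 1 ≤ α a b → dist (T a) (T b) ≤ dist a b := by
    intro a b h
    rcases eq_or_ne a b with rfl | hne
    · simp
    · have hd : 0 < dist a b := dist_pos.2 hne
      obtain ⟨δ, hδ, hδ2⟩ := hMK (dist a b) hd
      have h2 := hδ2 a b le_rfl (by linarith)
      have h3 : dist (T a) (T b) ≤ α a b * dist (T a) (T b) :=
        le_mul_of_one_le_left dist_nonneg h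
      linarith
  have adm_iter : ∀ a b : X, 1 ≤ α a b → ∀ k, 1 ≤ α (T^[k] a) (T^[k] b) := by
    intro a b h k
    induction k with
    | zero => simpa using h
    | succ k ih => simpa [Function.iterate_succ_apply'] using hadm _ _ ih
  -- distances between two parallel orbits tend to zero
  have tend0 : ∀ u v : ℕ → X, (∀ n, 1 ≤ α (u n) (v n)) →
      (∀ n, u (n + 1) = T (u n)) → (∀ n, v (n + 1) = T (v n)) →
      Tendsto (fun n => dist (u n) (v n)) atTop (nhds 0) := by
    intro u v huv hu hv
    set c : ℕ → ℝ := fun n => dist (u n) (v n) with hc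
    have hbdd : BddBelow (Set.range c) := ⟨0, by rintro _ ⟨n, rfl⟩; exact dist_nonneg⟩
    have hanti : Antitone c := by
      apply antitone_nat_of_succ_le
      intro n
      have h1 := mkle (u n) (v n) (huv n)
      have h2 : c (n + 1) = dist (T (u n)) (T (v n)) := by rw [hc]; simp [hu n, hv n]
      rw [h2]; exact h1
    have hlim := tendsto_atTop_ciInf hanti hbdd
    have hε0 : 0 ≤ ⨅ n, c n := le_ciInf fun n => dist_nonneg
    rcases hε0.eq_or_lt with heq | hpos
    · rwa [← heq] at hlim
    · exfalso
      obtain ⟨δ, hδ, hδ2⟩ := hMK _ hpos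
      obtain ⟨n₀, hn₀⟩ := exists_lt_of_ciInf_lt (lt_add_of_pos_right (⨅ n, c n) hδ)
      have hle : (⨅ n, c n) ≤ c n₀ := ciInf_le hbdd n₀
      have h2 := hδ2 (u n₀) (v n₀) hle hn₀
      have h4 : dist (T (u n₀)) (T (v n₀)) ≤ α (u n₀) (v n₀) * dist (T (u n₀)) (T (v n₀)) :=
        le_mul_of_one_le_left dist_nonneg (huv n₀)
      have h5 : c (n₀ + 1) = dist (T (u n₀)) (T (v n₀)) := by rw [hc]; simp [hu n₀, hv n₀]
      have h6 : (⨅ n, c n) ≤ c (n₀ + 1) := ciInf_le hbdd (n₀ + 1)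
      linarith
  -- α ≥ 1 along consecutive orbit points of x₀
  have hα1 : ∀ n : ℕ, 1 ≤ α (T^[n] x₀) (T^[n + 1] x₀) := by
    intro n
    have h := adm_iter x₀ (T x₀) hx₀ n
    rwa [← Function.iterate_succ_apply T n x₀] at h
  -- α ≥ 1 for jumps of size 1 + k*(N'+1)
  have halpha2 : ∀ n k : ℕ, 1 ≤ α (T^[n] x₀) (T^[n + 1 + k * (N' + 1)] x₀) := by
    intro n k
    induction k with
    | zero => simpa using hα1 n
    | succ k ih =>
      set z : ℕ → X := fun i => if i = 0 then T^[n] x₀ else T^[n + k * (N' + 1) + i] x₀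
        with hzdef
      have hlinks : ∀ i ≤ N' + 1, 1 ≤ α (z i) (z (i + 1)) := by
        intro i hi
        rcases Nat.eq_zero_or_pos i with rfl | hipos
        · have e : n + k * (N' + 1) + (0 + 1) = n + 1 + k * (N' + 1) := by ring
          simpa [hzdef, e] using ih
        · obtain ⟨j, rfl⟩ := Nat.exists_eq_succ_of_ne_zero hipos.ne'
          have h := hα1 (n + k * (N' + 1) + (j + 1))
          have e : n + k * (N' + 1) + (j + 1) + 1 = n + k * (N' + 1) + (j + 1 + 1) := by ring
          rw [e] at h
          simpa [hzdef] using h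
      have h := htrans z hlinks
      have e0 : z 0 = T^[n] x₀ := by simp [hzdef]
      have e1 : z (N' + 1 + 1) = T^[n + 1 + (k + 1) * (N' + 1)] x₀ := by
        have e : n + k * (N' + 1) + (N' + 1 + 1) = n + 1 + (k + 1) * (N' + 1) := by ring
        simp [hzdef, e]
      rwa [e0, e1] at h
  -- consecutive distances tend to zero
  have hdcons : Tendsto (fun n => dist (T^[n] x₀) (T^[n + 1] x₀)) atTop (nhds 0) :=
    tend0 (fun n => T^[n] x₀) (fun n => T^[n + 1] x₀) hα1
      (fun n => Function.iterate_succ_apply' T n x₀)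
      (fun n => Function.iterate_succ_apply' T (n + 1) x₀)
  -- the orbit of x₀ is Cauchy
  have hC : CauchySeq (fun n => T^[n] x₀) := by
    rw [Metric.cauchySeq_iff']
    intro ε hε
    set ε' := ε / 3 with hε'def
    have hε' : 0 < ε' := by positivity
    obtain ⟨δ, hδ, hδ2⟩ := hMK ε' hε'
    set δ' := min δ ε' with hδ'def
    have hδ'pos : 0 < δ' := lt_min hδ hε'
    have hδ'le : δ' ≤ δ := min_le_left _ _
    have hδ'le2 : δ' ≤ ε' := min_le_right _ _
    set c := δ' / ((N' : ℝ) + 2) with hcdef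
    have hN2 : (0:ℝ) < (N' : ℝ) + 2 := by positivity
    have hcpos : 0 < c := by positivity
    have hNc : ((N' : ℝ) + 1) * c < δ' := by
      rw [hcdef, mul_div_assoc', div_lt_iff₀ hN2]
      nlinarith [hδ'pos, (Nat.cast_nonneg N' : (0:ℝ) ≤ N')]
    have hcδ' : c < δ' := by
      nlinarith [(Nat.cast_nonneg N' : (0:ℝ) ≤ N')]
    obtain ⟨n₀, hn₀⟩ := eventually_atTop.1 ((tendsto_order.1 hdcons).2 c hcpos)
    -- bound on chains of consecutive steps
    have chain : ∀ m, n₀ ≤ m → ∀ j : ℕ, dist (T^[m] x₀) (T^[m + j] x₀) ≤ j * c := by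
      intro m hm j
      induction j with
      | zero => simp
      | succ j ih =>
        have h1 := hn₀ (m + j) (by omega)
        have h2 := dist_triangle (T^[m] x₀) (T^[m + j] x₀) (T^[m + j + 1] x₀)
        have e : m + (j + 1) = m + j + 1 := by ring
        rw [e]
        push_cast
        linarith
    -- main claim
    have claim : ∀ k, ∀ m, n₀ ≤ m →
        dist (T^[m] x₀) (T^[m + 1 + k * (N' + 1)] x₀) < ε' + δ' := by
      intro k
      induction k with
      | zero =>
        intro m hm
        have h1 := hn₀ m hm
        have e : m + 1 + 0 * (N' + 1) = m + 1 := by ring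
        rw [e]
        linarith
      | succ k ih =>
        intro m hm
        have hmul : (k + 1) * (N' + 1) = k * (N' + 1) + (N' + 1) := by ring
        rw [hmul]
        have hIH := ih m hm
        have hαmk := halpha2 m k
        set p := k * (N' + 1) with hp
        -- step: distance after applying T once is < ε'
        have hstep : dist (T^[m + 1] x₀) (T^[m + 2 + p] x₀) < ε' := by
          have e1 : T^[m + 1] x₀ = T (T^[m] x₀) := Function.iterate_succ_apply' T m x₀
          have e2 : T^[m + 2 + p] x₀ = T (T^[m + 1 + p] x₀) := by
            rw [show m + 2 + p = (m + 1 + p) + 1 from by ring]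
            exact Function.iterate_succ_apply' T (m + 1 + p) x₀
          rw [e1, e2]
          rcases lt_or_ge (dist (T^[m] x₀) (T^[m + 1 + p] x₀)) ε' with h | h
          · exact lt_of_le_of_lt (mkle _ _ hαmk) h
          · have h2 := hδ2 (T^[m] x₀) (T^[m + 1 + p] x₀) h (by linarith)
            have h3 : dist (T (T^[m] x₀)) (T (T^[m + 1 + p] x₀)) ≤
                α (T^[m] x₀) (T^[m + 1 + p] x₀) * dist (T (T^[m] x₀)) (T (T^[m + 1 + p] x₀)) :=
              le_mul_of_one_le_left dist_nonneg hαmk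
            linarith
        have htail : dist (T^[m + 2 + p] x₀) (T^[m + 2 + p + N'] x₀) ≤ N' * c :=
          chain (m + 2 + p) (by omega) N'
        have h1 := hn₀ m hm
        have htri1 := dist_triangle (T^[m] x₀) (T^[m + 1] x₀) (T^[m + 2 + p] x₀)
        have htri2 := dist_triangle (T^[m] x₀) (T^[m + 2 + p] x₀) (T^[m + 2 + p + N'] x₀)
        have e3 : m + 1 + (p + (N' + 1)) = m + 2 + p + N' := by omega
        rw [e3]
        have : (N' : ℝ) * c + c = ((N' : ℝ) + 1) * c := by ring
        linarith
    -- decomposition of any n ≥ n₀ + 1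
    have decomp : ∀ n, n₀ + 1 ≤ n → ∃ k r, r ≤ N' ∧ n₀ + 1 + k * (N' + 1) = n + r := by
      intro n hn
      induction n, hn using Nat.le_induction with
      | base => exact ⟨0, 0, Nat.zero_le _, by ring⟩
      | succ n hn ih =>
        obtain ⟨k, r, hr, he⟩ := ih
        rcases Nat.eq_zero_or_pos r with rfl | hrpos
        · refine ⟨k + 1, N', le_rfl, ?_⟩
          have h2 : (k + 1) * (N' + 1) = k * (N' + 1) + (N' + 1) := by ring
          rw [h2]
          omega
        · exact ⟨k, r - 1, by omega, by omega⟩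
    refine ⟨n₀, fun n hn => ?_⟩
    rcases eq_or_lt_of_le hn with rfl | hlt
    · simpa using hε
    · obtain ⟨k, r, hr, he⟩ := decomp n (by omega)
      have h1 : dist (T^[n] x₀) (T^[n + r] x₀) ≤ r * c := chain n hn r
      have h2 : dist (T^[n₀] x₀) (T^[n + r] x₀) < ε' + δ' := by
        rw [← he]; exact claim k n₀ le_rfl
      have htri := dist_triangle (T^[n] x₀) (T^[n + r] x₀) (T^[n₀] x₀)
      have hrc : (r : ℝ) * c ≤ ((N' : ℝ) + 1) * c := by
        have : (r : ℝ) ≤ (N' : ℝ) + 1 := by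
          have : (r : ℝ) ≤ (N' : ℝ) := Nat.cast_le.2 hr
          linarith
        nlinarith
      rw [dist_comm (T^[n + r] x₀) (T^[n₀] x₀)] at htri
      have : ε = ε' + ε' + ε' := by rw [hε'def]; ring
      linarith
  obtain ⟨xs, hconv⟩ := cauchySeq_tendsto_of_complete hC
  -- xs is a fixed point
  obtain ⟨φ, hφmono, hφ⟩ := horb x₀ xs hα1 hconv
  have hφtop : Tendsto (fun k => φ k + 1) atTop atTop :=
    tendsto_atTop_mono (fun k => le_trans hφmono.le_apply (Nat.le_succ _)) tendsto_id
  have h1 : Tendsto (fun k => T (T^[φ k] x₀)) atTop (nhds xs) := by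
    have h := hconv.comp hφtop
    have e : ((fun n => T^[n] x₀) ∘ fun k => φ k + 1) = fun k => T (T^[φ k] x₀) :=
      funext fun k => Function.iterate_succ_apply' T (φ k) x₀
    rwa [e] at h
  have hfix : T xs = xs := tendsto_nhds_unique hφ h1
  have hfixiter : ∀ n, T^[n] xs = xs := fun n => Function.iterate_fixed hfix n
  -- convergence of all orbits
  have hall : ∀ y : X, Tendsto (fun n : ℕ => T^[n] y) atTop (nhds xs) := by
    intro y
    rcases eq_or_ne y xs with rfl | hne
    · simpa [hfixiter] using (tendsto_const_nhds : Tendsto (fun _ : ℕ => xs) atTop (nhds xs))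
    · obtain ⟨n, z, hz0, hzn, hzl⟩ := hconn y xs hne
      have key : ∀ i, i ≤ n →
          Tendsto (fun k => dist (T^[k] (z 0)) (T^[k] (z i))) atTop (nhds 0) := by
        intro i
        induction i with
        | zero => intro _; simpa using (tendsto_const_nhds : Tendsto (fun _ : ℕ => (0:ℝ)) atTop (nhds 0))
        | succ i ih =>
          intro hin
          have h1 := ih (by omega)
          have h2 : Tendsto (fun k => dist (T^[k] (z i)) (T^[k] (z (i + 1)))) atTop (nhds 0) := by
            rcases hzl i (by omega) with h | h
            · exact tend0 (fun k => T^[k] (z i)) (fun k => T^[k] (z (i + 1)))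
                (fun k => adm_iter _ _ h k)
                (fun k => Function.iterate_succ_apply' T k (z i))
                (fun k => Function.iterate_succ_apply' T k (z (i + 1)))
            · have h3 := tend0 (fun k => T^[k] (z (i + 1))) (fun k => T^[k] (z i))
                (fun k => adm_iter _ _ h k)
                (fun k => Function.iterate_succ_apply' T k (z (i + 1)))
                (fun k => Function.iterate_succ_apply' T k (z i))
              simpa [dist_comm] using h3
          apply squeeze_zero (fun k => dist_nonneg)
            (fun k => dist_triangle (T^[k] (z 0)) (T^[k] (z i)) (T^[k] (z (i + 1))))
          simpa using h1.add h2
      have hkey := key n le_rfl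
      rw [tendsto_iff_dist_tendsto_zero]
      simpa [hz0, hzn, hfixiter] using hkey
  refine ⟨xs, hfix, fun y hy => ?_, hall⟩
  have hyiter : ∀ n : ℕ, T^[n] y = y := fun n => Function.iterate_fixed hy n
  have := hall y
  rw [show (fun n : ℕ => T^[n] y) = fun _ : ℕ => y from funext hyiter] at this
  exact tendsto_nhds_unique tendsto_const_nhds this
end

section
/- Let (X,d) be a complete metric space, α : (X×X) × (X×X) → [0,∞) an N-transitive mapping on X × X for some N ≥ 1, and F : X × X → X a continuous mapping such that for every ε > 0 there exists δ > 0 with: ε ≤ (d(x,u)+d(y,v))/2 < ε + δ implies α((x,y),(u,v))·d(F(x,y),F(u,v)) < ε. Assume (B1): α((x,y),(u,v)) ≥ 1 implies α((F(x,y),F(y,x)),(F(u,v),F(v,u))) ≥ 1; and (B2): there is (x₀,y₀) with α((x₀,y₀),(F(x₀,y₀),F(y₀,x₀))) ≥ 1 and α((F(y₀,x₀),F(x₀,y₀)),(y₀,x₀)) ≥ 1. Then F has a coupled fixed point, i.e., there exist x*, y* ∈ X with x* = F(x*,y*) and y* = F(y*,x*). -/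
theorem my_aux {Z : Type*} [MetricSpace Z] [CompleteSpace Z]
    (T : Z → Z) (hT : Continuous T) (D : Z → Z → ℝ)
    (hD0 : ∀ p, D p p = 0)
    (hDnn : ∀ p q, 0 ≤ D p q)
    (hDtri : ∀ p q r, D p r ≤ D p q + D q r)
    (hDsymm : ∀ p q, D p q = D q p)
    (hDd : ∀ p q, dist p q ≤ 2 * D p q)
    (β : Z → Z → ℝ) (N : ℕ) (hN : 1 ≤ N)
    (hβtrans : ∀ q : ℕ → Z, (∀ i ≤ N, 1 ≤ β (q i) (q (i+1))) → 1 ≤ β (q 0) (q (N+1)))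
    (hMK : ∀ ε > (0:ℝ), ∃ δ > (0:ℝ), ∀ p q, 1 ≤ β p q → ε ≤ D p q → D p q < ε + δ →
      D (T p) (T q) < ε)
    (hcontr : ∀ p q, 1 ≤ β p q → D (T p) (T q) ≤ D p q)
    (hβT : ∀ p q, 1 ≤ β p q → 1 ≤ β (T p) (T q))
    (z₀ : Z) (hz₀ : 1 ≤ β z₀ (T z₀)) :
    ∃ z, T z = z := by
  obtain ⟨N', rfl⟩ : ∃ N', N = N' + 1 := ⟨N - 1, by omega⟩
  set N := N' + 1 with hNdef
  set p : ℕ → Z := fun n => T^[n] z₀ with hp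
  have hpsucc : ∀ n, p (n+1) = T (p n) := fun n => Function.iterate_succ_apply' T n z₀
  set s : ℕ → ℝ := fun n => D (p n) (p (n+1)) with hs
  have hcons : ∀ n, 1 ≤ β (p n) (p (n+1)) := by
    intro n; induction n with
    | zero => simpa [hp] using hz₀
    | succ n ih => rw [hpsucc n, hpsucc (n+1)]; exact hβT _ _ ih
  have hA : ∀ n k, 1 ≤ β (p n) (p (n + (k*N + 1))) := by
    intro n k; induction k with
    | zero => simpa using hcons n
    | succ k ih =>
      have h := hβtrans (fun i => if i = 0 then p n else p (n + k*N + i)) ?_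
      · have e : n + k*N + (N+1) = n + ((k+1)*N + 1) := by ring
        simpa [e] using h
      · intro i hi
        rcases Nat.eq_zero_or_pos i with rfl | h0
        · have e : n + k*N + 1 = n + (k*N+1) := by ring
          simpa [e] using ih
        · have hne : i ≠ 0 := h0.ne'
          have e : n + k*N + (i+1) = (n + k*N + i) + 1 := by ring
          simp only [hne, if_neg, Nat.succ_ne_zero, ite_false, e]
          exact hcons (n + k*N + i)
  have hsanti : ∀ n, s (n+1) ≤ s n := by
    intro n
    have key := hcontr _ _ (hcons n)
    have e1 : s (n+1) = D (T (p n)) (T (p (n+1))) := by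
      rw [hs]; simp only []
      rw [hpsucc (n+1), hpsucc n]
    rw [e1]
    simpa [hs] using key
  have hsnn : ∀ n, 0 ≤ s n := fun n => hDnn _ _
  have hbdd : BddBelow (Set.range s) := ⟨0, by rintro x ⟨n, rfl⟩; exact hsnn n⟩
  have hanti : Antitone s := antitone_nat_of_succ_le hsanti
  have hstend : Filter.Tendsto s Filter.atTop (nhds (⨅ n, s n)) :=
    tendsto_atTop_ciInf hanti hbdd
  have hinf : (⨅ n, s n) = 0 := by
    rcases lt_or_eq_of_le (le_ciInf hsnn) with hr | hr
    · exfalso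
      obtain ⟨δ, hδ, hMKr⟩ := hMK _ hr
      obtain ⟨n, hn⟩ := exists_lt_of_ciInf_lt (lt_add_of_pos_right (⨅ n, s n) hδ)
      have h1 : (⨅ n, s n) ≤ s n := ciInf_le hbdd n
      have h2 : (⨅ n, s n) ≤ s (n+1) := ciInf_le hbdd (n+1)
      have h3 := hMKr (p n) (p (n+1)) (hcons n) h1 hn
      have e1 : s (n+1) = D (T (p n)) (T (p (n+1))) := by
        rw [hs]; simp only []
        rw [hpsucc (n+1), hpsucc n]
      rw [← e1] at h3
      linarith
    · exact hr.symm
  rw [hinf] at hstend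
  have hsmall : ∀ η > (0:ℝ), ∃ n₀, ∀ n ≥ n₀, s n < η := by
    intro η hη
    have := hstend.eventually (gt_mem_nhds hη)
    exact Filter.eventually_atTop.mp this
  have tele : ∀ a b, D (p a) (p (a+b)) ≤ ∑ i ∈ Finset.range b, s (a+i) := by
    intro a b; induction b with
    | zero => simpa using (hD0 (p a)).le
    | succ b ih =>
      have h1 : D (p a) (p (a+(b+1))) ≤ D (p a) (p (a+b)) + s (a+b) := by
        have h := hDtri (p a) (p (a+b)) (p (a+b+1))
        have e : a+(b+1) = a+b+1 := by ring
        rw [e]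
        simpa [hs] using h
      rw [Finset.sum_range_succ]
      linarith
  have hNr : (1:ℝ) ≤ (N:ℝ) := by exact_mod_cast hN
  have key : ∀ ε > (0:ℝ), ∃ n₀, ∀ n ≥ n₀, ∀ m ≥ n, D (p n) (p m) < 2*ε := by
    intro ε hε
    obtain ⟨δ', hδ', hMKε⟩ := hMK ε hε
    set δ := min δ' ε with hδdef
    have hδpos : 0 < δ := lt_min hδ' hε
    have hδle : δ ≤ ε := min_le_right _ _
    have hδle' : δ ≤ δ' := min_le_left _ _
    set η := δ / (2*((N:ℝ)+2)) with hηdef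
    have hηpos : 0 < η := by positivity
    have hNη : (N:ℝ) * η ≤ δ/2 := by
      rw [hηdef, mul_div_assoc']
      rw [div_le_div_iff₀ (by positivity) two_pos]
      nlinarith [hδpos.le]
    have hη1 : η ≤ (N:ℝ)*η := le_mul_of_one_le_left hηpos.le hNr
    obtain ⟨n₀, hn₀⟩ := hsmall η hηpos
    have sumb : ∀ a b, n₀ ≤ a → (∑ i ∈ Finset.range b, s (a+i)) ≤ (b:ℝ) * η := by
      intro a b ha
      calc ∑ i ∈ Finset.range b, s (a+i) ≤ ∑ _i ∈ Finset.range b, η :=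
            Finset.sum_le_sum (fun i _ => (hn₀ (a+i) (le_trans ha (Nat.le_add_right a i))).le)
        _ = (b:ℝ) * η := by simp [Finset.sum_const, nsmul_eq_mul]
    have claim : ∀ j, ∀ n, n₀ ≤ n → D (p n) (p (n + (j*N + 1))) < ε + δ/2 := by
      intro j; induction j with
      | zero =>
        intro n hn
        have h1 := hn₀ n hn
        rw [hs] at h1; simp only [] at h1
        have e : n + (0*N+1) = n + 1 := by ring
        rw [e]
        linarith
      | succ j ih =>
        intro n hn
        set m := n + (j*N + 1) with hm
        have hmn₀ : n₀ ≤ m := le_trans hn (by omega)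
        have ih' := ih n hn
        have hβnm : 1 ≤ β (p n) (p m) := hA n j
        have hTT : D (p (n+1)) (p (m+1)) ≤ ε := by
          rw [hpsucc n, hpsucc m]
          rcases le_or_gt (D (p n) (p m)) ε with h | h
          · exact le_trans (hcontr _ _ hβnm) h
          · exact (hMKε (p n) (p m) hβnm h.le (by linarith)).le
        have hidx : n + ((j+1)*N + 1) = (m+1) + N' := by
          rw [hm, hNdef]; ring
        rw [hidx]
        have t1 := hDtri (p n) (p (n+1)) (p ((m+1) + N'))
        have t2 := hDtri (p (n+1)) (p (m+1)) (p ((m+1) + N'))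
        have b1 : D (p n) (p (n+1)) < η := by
          have h1 := hn₀ n hn
          rw [hs] at h1; simpa using h1
        have b3 : D (p (m+1)) (p ((m+1) + N')) ≤ (N':ℝ) * η :=
          le_trans (tele (m+1) N') (sumb (m+1) N' (by omega))
        have hcast : (N':ℝ) + 1 = (N:ℝ) := by rw [hNdef]; push_cast; ring
        nlinarith [hηpos.le]
    have hex : ∀ q : ℕ, 1 ≤ q → ∃ j e : ℕ, e + q = j*N + 1 ∧ e < N := by
      intro q hq
      induction q with
      | zero => omega
      | succ q ih =>
        rcases Nat.lt_or_ge q 1 with hq1 | hq1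
        · refine ⟨0, 0, ?_, by omega⟩
          have : 0*N = 0 := Nat.zero_mul N
          omega
        · obtain ⟨j, e, he, heN⟩ := ih hq1
          rcases Nat.eq_zero_or_pos e with rfl | he1
          · refine ⟨j+1, N-1, ?_, by omega⟩
            have h2 : (j+1)*N = j*N + N := by ring
            omega
          · exact ⟨j, e-1, by omega, by omega⟩
    refine ⟨n₀, fun n hn m hm => ?_⟩
    rcases Nat.eq_or_lt_of_le hm with rfl | hlt
    · rw [hD0]; linarith
    · obtain ⟨q, hq1, rfl⟩ : ∃ q, 1 ≤ q ∧ m = n + q := ⟨m - n, by omega, by omega⟩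
      obtain ⟨j, e, he, heN⟩ := hex q hq1
      have hidx : n + (j*N + 1) = (n+q) + e := by omega
      have t1 := hDtri (p n) (p ((n+q)+e)) (p (n+q))
      have c1 : D (p n) (p ((n+q)+e)) < ε + δ/2 := by
        rw [← hidx]; exact claim j n hn
      have c2 : D (p ((n+q)+e)) (p (n+q)) ≤ (N:ℝ) * η := by
        rw [hDsymm]
        refine le_trans (le_trans (tele (n+q) e) (sumb (n+q) e (by omega))) ?_
        have : (e:ℝ) ≤ (N:ℝ) := by exact_mod_cast heN.le
        nlinarith [hηpos.le]
      linarith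
  have hcauchy : CauchySeq p := by
    rw [Metric.cauchySeq_iff']
    intro ε hε
    obtain ⟨n₀, h⟩ := key (ε/8) (by positivity)
    refine ⟨n₀, fun n hn => ?_⟩
    have h1 := h n₀ le_rfl n hn
    have h2 := hDd (p n₀) (p n)
    rw [dist_comm]
    calc dist (p n₀) (p n) ≤ 2 * D (p n₀) (p n) := h2
      _ < ε := by linarith
  obtain ⟨z, hz⟩ := cauchySeq_tendsto_of_complete hcauchy
  refine ⟨z, ?_⟩
  have h1 : Filter.Tendsto (fun n => p (n+1)) Filter.atTop (nhds (T z)) := by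
    have h := (hT.tendsto z).comp hz
    exact h.congr (fun n => (hpsucc n).symm)
  have h2 : Filter.Tendsto (fun n => p (n+1)) Filter.atTop (nhds z) :=
    hz.comp (Filter.tendsto_add_atTop_nat 1)
  exact tendsto_nhds_unique h1 h2

theorem stmt_12 {X : Type*} [MetricSpace X] [CompleteSpace X]
    (F : X × X → X) (hF : Continuous F)
    (α : X × X → X × X → ℝ) (N : ℕ) (hN : 1 ≤ N)
    (hαnn : ∀ p q, 0 ≤ α p q)
    (htrans : ∀ p : ℕ → X × X,
      (∀ i ≤ N, 1 ≤ α (p i) (p (i + 1))) → 1 ≤ α (p 0) (p (N + 1)))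
    (hMK : ∀ ε > (0:ℝ), ∃ δ > (0:ℝ), ∀ x y u v : X,
      ε ≤ (dist x u + dist y v) / 2 → (dist x u + dist y v) / 2 < ε + δ →
      α (x, y) (u, v) * dist (F (x, y)) (F (u, v)) < ε)
    (hB1 : ∀ x y u v : X, 1 ≤ α (x, y) (u, v) →
      1 ≤ α (F (x, y), F (y, x)) (F (u, v), F (v, u)))
    (hB2 : ∃ x₀ y₀ : X,
      1 ≤ α (x₀, y₀) (F (x₀, y₀), F (y₀, x₀)) ∧
      1 ≤ α (F (y₀, x₀), F (x₀, y₀)) (y₀, x₀)) :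
    ∃ xs ys : X, xs = F (xs, ys) ∧ ys = F (ys, xs) := by
  obtain ⟨x₀, y₀, hb2a, hb2b⟩ := hB2
  set T : X × X → X × X := fun p => (F p, F (p.2, p.1)) with hT
  set D : X × X → X × X → ℝ := fun p q => (dist p.1 q.1 + dist p.2 q.2)/2 with hD
  set β : X × X → X × X → ℝ := fun p q => min (α p q) (α (q.2, q.1) (p.2, p.1)) with hβ
  have hTcont : Continuous T := by
    rw [hT]
    exact hF.prodMk (hF.comp (continuous_snd.prodMk continuous_fst))
  have hD0 : ∀ p, D p p = 0 := by intro p; simp [hD]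
  have hDnn : ∀ p q, 0 ≤ D p q := by
    intro p q; rw [hD]
    have := dist_nonneg (x := p.1) (y := q.1)
    have := dist_nonneg (x := p.2) (y := q.2)
    positivity
  have hDtri : ∀ p q r, D p r ≤ D p q + D q r := by
    intro p q r; rw [hD]; simp only []
    have := dist_triangle p.1 q.1 r.1
    have := dist_triangle p.2 q.2 r.2
    linarith
  have hDsymm : ∀ p q, D p q = D q p := by
    intro p q; rw [hD]; simp only []
    rw [dist_comm, dist_comm p.2 q.2]
  have hDd : ∀ p q, dist p q ≤ 2 * D p q := by
    intro p q
    rw [Prod.dist_eq, hD]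
    have := dist_nonneg (x := p.1) (y := q.1)
    have := dist_nonneg (x := p.2) (y := q.2)
    rw [max_le_iff]
    constructor <;> · simp only []; linarith
  have hβtrans : ∀ q : ℕ → X × X, (∀ i ≤ N, 1 ≤ β (q i) (q (i+1))) → 1 ≤ β (q 0) (q (N+1)) := by
    intro q hq
    have h1 : 1 ≤ α (q 0) (q (N+1)) :=
      htrans q (fun i hi => le_trans (hq i hi) (by rw [hβ]; exact min_le_left _ _))
    have h2 : 1 ≤ α ((q (N+1)).2, (q (N+1)).1) ((q 0).2, (q 0).1) := by
      have h := htrans (fun i => ((q (N+1-i)).2, (q (N+1-i)).1)) ?_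
      · simpa using h
      · intro i hi
        have e1 : N+1-i = (N-i)+1 := by omega
        have e2 : N+1-(i+1) = N-i := by omega
        simp only [e1, e2]
        exact le_trans (hq (N-i) (by omega)) (by rw [hβ]; exact min_le_right _ _)
    rw [hβ]
    exact le_min h1 h2
  have hβT : ∀ p q, 1 ≤ β p q → 1 ≤ β (T p) (T q) := by
    intro p q h
    rw [hβ] at h
    have ha : 1 ≤ α p q := le_trans h (min_le_left _ _)
    have hb : 1 ≤ α (q.2, q.1) (p.2, p.1) := le_trans h (min_le_right _ _)
    rw [hβ]
    refine le_min ?_ ?_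
    · have h1 := hB1 p.1 p.2 q.1 q.2 (by simpa using ha)
      simpa [hT] using h1
    · have h1 := hB1 q.2 q.1 p.2 p.1 hb
      simpa [hT] using h1
  have hMKD : ∀ ε > (0:ℝ), ∃ δ > (0:ℝ), ∀ p q, 1 ≤ β p q → ε ≤ D p q → D p q < ε + δ →
      D (T p) (T q) < ε := by
    intro ε hε
    obtain ⟨δ, hδ, h⟩ := hMK ε hε
    refine ⟨δ, hδ, fun p q hβpq h1 h2 => ?_⟩
    rw [hβ] at hβpq
    have ha : 1 ≤ α p q := le_trans hβpq (min_le_left _ _)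
    have hb : 1 ≤ α (q.2, q.1) (p.2, p.1) := le_trans hβpq (min_le_right _ _)
    rw [hD] at h1 h2 ⊢
    simp only [] at h1 h2 ⊢
    have k1 := h p.1 p.2 q.1 q.2 (by simpa using h1) (by simpa using h2)
    have k2 := h q.2 q.1 p.2 p.1
      (by rw [dist_comm q.2 p.2, dist_comm q.1 p.1]; linarith)
      (by rw [dist_comm q.2 p.2, dist_comm q.1 p.1]; linarith)
    simp only [Prod.mk.eta] at k1
    have d1 : dist (F p) (F q) < ε := by
      have := le_mul_of_one_le_left (dist_nonneg (x := F p) (y := F q)) ha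
      linarith
    have d2 : dist (F (q.2, q.1)) (F (p.2, p.1)) < ε := by
      have := le_mul_of_one_le_left (dist_nonneg (x := F (q.2, q.1)) (y := F (p.2, p.1))) hb
      linarith
    rw [dist_comm (F (p.2, p.1)) (F (q.2, q.1))]
    linarith
  have hcontr : ∀ p q, 1 ≤ β p q → D (T p) (T q) ≤ D p q := by
    intro p q hβpq
    rcases eq_or_lt_of_le (hDnn p q) with h0 | h0
    · have hpq : p = q := by
        rw [hD] at h0
        simp only [] at h0
        have d1 : dist p.1 q.1 = 0 := by
          have := dist_nonneg (x := p.1) (y := q.1)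
          have := dist_nonneg (x := p.2) (y := q.2)
          linarith
        have d2 : dist p.2 q.2 = 0 := by
          have := dist_nonneg (x := p.1) (y := q.1)
          have := dist_nonneg (x := p.2) (y := q.2)
          linarith
        have e1 : p.1 = q.1 := by rwa [dist_eq_zero] at d1
        have e2 : p.2 = q.2 := by rwa [dist_eq_zero] at d2
        exact Prod.ext e1 e2
      rw [hpq, hD0]
      exact hDnn q q
    · obtain ⟨δ, hδ, h⟩ := hMKD (D p q) h0
      exact (h p q hβpq le_rfl (lt_add_of_pos_right _ hδ)).le
  have hz₀ : 1 ≤ β (x₀, y₀) (T (x₀, y₀)) := by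
    rw [hβ, hT]
    exact le_min (by simpa using hb2a) (by simpa using hb2b)
  obtain ⟨z, hz⟩ := my_aux T hTcont D hD0 hDnn hDtri hDsymm hDd β N hN hβtrans hMKD hcontr hβT
    (x₀, y₀) hz₀
  refine ⟨z.1, z.2, ?_, ?_⟩
  · have h := congrArg Prod.fst hz
    simpa [hT] using h.symm
  · have h := congrArg Prod.snd hz
    simpa [hT] using h.symm
end

section
/- Let (X,d) be a complete metric space, R an N-transitive binary relation on X (N ≥ 1), and T : X → X a continuous R-preserving mapping such that for every ε > 0 there is δ > 0 with: x R y and ε ≤ d(x,y) < ε + δ implies d(Tx,Ty) < ε. If there exists x₀ with x₀ R Tx₀, then T has a fixed point. -/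
/-!
Along the orbit `xₙ = Tⁿ x₀` consecutive points are related, so the Meir–Keeler condition makes
the steps `d(xₙ, xₙ₊₁)` decrease to `0`, and `N`-transitivity relates `xₘ` to every `xₘ₊ⱼₙ₊₁`.
Given `ε`, once the steps are below `δ / N`, induction on `j` keeps `d(xₙ₀, xₙ₀₊ⱼₙ₊₁) < ε + δ`:
the middle part of the detour `xₙ₀ → xₙ₀₊₁ → xₙ₀₊ⱼₙ₊₂ → xₙ₀₊₍ⱼ₊₁₎ₙ₊₁` is the image under `T` of
a related pair at distance `< ε + δ`, hence `< ε`, and the other `N` steps add less than `δ`.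
So the orbit is Cauchy, and its limit is fixed by continuity.
-/

open Filter Topology

def IsMeirKeeler {X : Type*} [PseudoMetricSpace X] (R : X → X → Prop) (T : X → X) : Prop :=
  ∀ ε > (0 : ℝ), ∃ δ > (0 : ℝ), ∀ x y : X,
    R x y → ε ≤ dist x y → dist x y < ε + δ → dist (T x) (T y) < ε

theorem rel_iterate_succ {α : Type*} {R : α → α → Prop} {T : α → α}
    (hpres : ∀ x y, R x y → R (T x) (T y)) {x : α} (hx : R x (T x)) (n : ℕ) :
    R (T^[n] x) (T^[n + 1] x) := by
  induction n with
  | zero => exact hx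
  | succ n ih => simpa only [Function.iterate_succ_apply'] using hpres _ _ ih

theorem rel_add_mul_add_one {α : Type*} {R : α → α → Prop} {N : ℕ}
    (htrans : ∀ z : ℕ → α, (∀ i ≤ N, R (z i) (z (i + 1))) → R (z 0) (z (N + 1)))
    {x : ℕ → α} (hx : ∀ n, R (x n) (x (n + 1))) (m j : ℕ) :
    R (x m) (x (m + (j * N + 1))) := by
  induction j with
  | zero => simpa using hx m
  | succ j ih =>
    have hchain := htrans (fun i => if i = 0 then x m else x (m + j * N + i)) fun i _ => by
      rcases i with _ | i
      · simpa [add_assoc] using ih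
      · simpa [add_assoc] using hx (m + j * N + (i + 1))
    rw [if_pos rfl, if_neg N.succ_ne_zero] at hchain
    convert hchain using 2
    ring

theorem dist_add_le_mul {X : Type*} [PseudoMetricSpace X] {x : ℕ → X} {m : ℕ} {c : ℝ}
    (hc : ∀ i ≥ m, dist (x i) (x (i + 1)) ≤ c) (k : ℕ) :
    dist (x m) (x (m + k)) ≤ k * c := by
  calc dist (x m) (x (m + k)) ≤ ∑ _i ∈ Finset.Ico m (m + k), c :=
        dist_le_Ico_sum_of_dist_le (by omega) fun hi _ => hc _ hi
    _ = k * c := by simp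

theorem dist_add_mul_add_one_lt {X : Type*} [PseudoMetricSpace X] {R : X → X → Prop}
    {T : X → X} {x : ℕ → X} (hxT : ∀ n, x (n + 1) = T (x n)) {N n₀ : ℕ} (hN : 0 < N)
    (hR : ∀ j, R (x n₀) (x (n₀ + (j * N + 1)))) {ε δ : ℝ} (hε : 0 < ε)
    (hk : ∀ a b, R a b → dist a b < ε + δ → dist (T a) (T b) < ε)
    (hd : ∀ i ≥ n₀, dist (x i) (x (i + 1)) < δ / N) (j : ℕ) :
    dist (x n₀) (x (n₀ + (j * N + 1))) < ε + δ := by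
  have hδ : 0 < δ :=
    (div_pos_iff_of_pos_right (by exact_mod_cast hN)).1 (dist_nonneg.trans_lt (hd n₀ le_rfl))
  induction j with
  | zero =>
    have hstep := (hd n₀ le_rfl).trans_le (div_le_self hδ.le (by exact_mod_cast hN))
    simpa using hstep.trans (lt_add_of_pos_left δ hε)
  | succ j ih =>
    set a := n₀ + (j * N + 1)
    have hmid : dist (x (n₀ + 1)) (x (a + 1)) < ε := by
      rw [hxT, hxT]
      exact hk _ _ (hR j) ih
    have htail : dist (x (a + 1)) (x (a + 1 + (N - 1))) ≤ (N - 1 : ℕ) * (δ / N) :=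
      dist_add_le_mul (fun i hi => (hd i (by omega)).le) _
    have hidx : n₀ + ((j + 1) * N + 1) = a + 1 + (N - 1) := by
      rw [add_mul, one_mul]
      omega
    calc dist (x n₀) (x (n₀ + ((j + 1) * N + 1)))
        ≤ dist (x n₀) (x (n₀ + 1)) + dist (x (n₀ + 1)) (x (a + 1))
          + dist (x (a + 1)) (x (a + 1 + (N - 1))) := by
          rw [hidx]
          exact dist_triangle4 _ _ _ _
      _ < δ / N + ε + (N - 1 : ℕ) * (δ / N) :=
          add_lt_add_of_lt_of_le (add_lt_add (hd n₀ le_rfl) hmid) htail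
      _ = ε + δ := by
          rw [Nat.cast_pred hN]
          field_simp
          ring

namespace IsMeirKeeler

variable {X : Type*} [MetricSpace X] {R : X → X → Prop} {T : X → X}

theorem dist_le (h : IsMeirKeeler R T) {a b : X} (hab : R a b) :
    dist (T a) (T b) ≤ dist a b := by
  rcases (dist_nonneg (x := a) (y := b)).eq_or_lt with h0 | hpos
  · rw [dist_eq_zero.1 h0.symm, dist_self, dist_self]
  · obtain ⟨δ, hδ, hk⟩ := h _ hpos
    exact (hk a b hab le_rfl (lt_add_of_pos_right _ hδ)).le

theorem exists_pos_forall_lt (h : IsMeirKeeler R T) {ε : ℝ} (hε : 0 < ε) :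
    ∃ δ > 0, ∀ a b, R a b → dist a b < ε + δ → dist (T a) (T b) < ε := by
  obtain ⟨δ, hδ, hk⟩ := h ε hε
  refine ⟨δ, hδ, fun a b hab hlt => ?_⟩
  rcases lt_or_ge (dist a b) ε with hlt' | hge
  · exact (h.dist_le hab).trans_lt hlt'
  · exact hk a b hab hge hlt

theorem tendsto_dist_succ (h : IsMeirKeeler R T) {x : ℕ → X}
    (hxT : ∀ n, x (n + 1) = T (x n)) (hx : ∀ n, R (x n) (x (n + 1))) :
    Tendsto (fun n => dist (x n) (x (n + 1))) atTop (𝓝 0) := by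
  set d := fun n => dist (x n) (x (n + 1))
  have hanti : Antitone d := antitone_nat_of_succ_le fun n => by
    have := h.dist_le (hx n)
    rwa [← hxT, ← hxT] at this
  have hbdd : BddBelow (Set.range d) := ⟨0, by rintro _ ⟨n, rfl⟩; exact dist_nonneg⟩
  have hlim := tendsto_atTop_ciInf hanti hbdd
  suffices hr : ⨅ n, d n = 0 by rwa [hr] at hlim
  by_contra hne
  have hpos : 0 < ⨅ n, d n := (le_ciInf fun _ => dist_nonneg).lt_of_ne' hne
  obtain ⟨δ, hδ, hk⟩ := h _ hpos
  obtain ⟨n, hn⟩ := (hlim.eventually_lt_const (lt_add_of_pos_right _ hδ)).exists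
  have hstep := hk _ _ (hx n) (ciInf_le hbdd n) hn
  rw [← hxT, ← hxT] at hstep
  exact (ciInf_le hbdd (n + 1)).not_gt hstep

theorem cauchySeq (h : IsMeirKeeler R T) {x : ℕ → X} (hxT : ∀ n, x (n + 1) = T (x n))
    (hx : ∀ n, R (x n) (x (n + 1))) {N : ℕ} (hN : 0 < N)
    (hR : ∀ m j, R (x m) (x (m + (j * N + 1)))) : CauchySeq x := by
  rw [Metric.cauchySeq_iff']
  intro ε hε
  obtain ⟨δ₀, hδ₀, hk⟩ := h.exists_pos_forall_lt (by positivity : 0 < ε / 3)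
  set δ := min δ₀ (ε / 3)
  have hk' : ∀ a b, R a b → dist a b < ε / 3 + δ → dist (T a) (T b) < ε / 3 :=
    fun a b hab hlt => hk a b hab (hlt.trans_le (by gcongr; exact min_le_left _ _))
  have hδN : 0 < δ / N := by positivity
  obtain ⟨n₀, hn₀⟩ :=
    eventually_atTop.1 ((h.tendsto_dist_succ hxT hx).eventually_lt_const hδN)
  refine ⟨n₀, fun n hn => ?_⟩
  rcases hn.eq_or_lt with rfl | hlt
  · simpa using hε
  obtain ⟨j, r, hr, rfl⟩ : ∃ j r, r < N ∧ n = n₀ + (j * N + 1) + r :=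
    ⟨(n - n₀ - 1) / N, (n - n₀ - 1) % N, Nat.mod_lt _ hN, by
      have := Nat.div_add_mod' (n - n₀ - 1) N
      omega⟩
  have htail : dist (x (n₀ + (j * N + 1))) (x (n₀ + (j * N + 1) + r)) ≤ δ :=
    calc _ ≤ r * (δ / N) := dist_add_le_mul (fun i hi => (hn₀ i (by omega)).le) r
      _ ≤ N * (δ / N) := by gcongr
      _ = δ := mul_div_cancel₀ δ (by positivity)
  rw [dist_comm]
  calc dist (x n₀) (x (n₀ + (j * N + 1) + r))
      ≤ dist (x n₀) (x (n₀ + (j * N + 1)))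
        + dist (x (n₀ + (j * N + 1))) (x (n₀ + (j * N + 1) + r)) := dist_triangle _ _ _
    _ < ε / 3 + δ + δ := by
        have hhead := dist_add_mul_add_one_lt hxT hN (hR n₀) (by positivity) hk' hn₀ j
        exact add_lt_add_of_lt_of_le hhead htail
    _ ≤ ε := by linarith [min_le_right δ₀ (ε / 3)]

end IsMeirKeeler

theorem stmt_14 {X : Type*} [MetricSpace X] [CompleteSpace X]
    (R : X → X → Prop) (N : ℕ) (hN : 1 ≤ N)
    (htrans : ∀ z : ℕ → X, (∀ i ≤ N, R (z i) (z (i + 1))) → R (z 0) (z (N + 1)))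
    (T : X → X) (hT : Continuous T)
    (hpres : ∀ x y : X, R x y → R (T x) (T y))
    (hMK : ∀ ε > (0:ℝ), ∃ δ > (0:ℝ), ∀ x y : X,
      R x y → ε ≤ dist x y → dist x y < ε + δ → dist (T x) (T y) < ε)
    (x₀ : X) (hx₀ : R x₀ (T x₀)) :
    ∃ xs : X, T xs = xs := by
  have hMK : IsMeirKeeler R T := hMK
  have hxT (n : ℕ) : T^[n + 1] x₀ = T (T^[n] x₀) := Function.iterate_succ_apply' T n x₀
  have hx := rel_iterate_succ hpres hx₀
  obtain ⟨xs, hxs⟩ := cauchySeq_tendsto_of_complete <|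
    hMK.cauchySeq hxT hx hN (rel_add_mul_add_one htrans hx)
  exact ⟨xs, isFixedPt_of_tendsto_iterate hxs hT.continuousAt⟩
end

section
/- Let (X,d) be a complete metric space, R an N-transitive binary relation on X (N ≥ 1), and T : X → X an R-preserving mapping such that for every ε > 0 there is δ > 0 with: x R y and ε ≤ d(x,y) < ε + δ implies d(Tx,Ty) < ε. Suppose there exists x₀ with x₀ R Tx₀, (X,d) is (T,R)-regular, and X is R-connected. Then T has a unique fixed point x* and Tⁿx → x* for every x ∈ X. -/
open Filter

section Aux
set_option linter.unusedSectionVars false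
variable {X : Type*} [MetricSpace X] (R : X → X → Prop) (T : X → X)

lemma aux_le (hMK : ∀ ε > (0:ℝ), ∃ δ > (0:ℝ), ∀ x y : X,
      R x y → ε ≤ dist x y → dist x y < ε + δ → dist (T x) (T y) < ε) :
    ∀ x y : X, R x y → dist (T x) (T y) ≤ dist x y := by
  intro x y hxy
  rcases eq_or_ne x y with rfl | hne
  · simp
  · have hpos : 0 < dist x y := dist_pos.2 hne
    obtain ⟨δ, hδ, h⟩ := hMK (dist x y) hpos
    exact le_of_lt (h x y hxy le_rfl (by linarith))

lemma aux_rel (hpres : ∀ x y : X, R x y → R (T x) (T y)) {u v : X} (huv : R u v) :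
    ∀ n : ℕ, R (T^[n] u) (T^[n] v) := by
  intro n
  induction n with
  | zero => simpa using huv
  | succ n ih =>
    rw [Function.iterate_succ_apply', Function.iterate_succ_apply']
    exact hpres _ _ ih

lemma aux_tendsto_zero (hpres : ∀ x y : X, R x y → R (T x) (T y))
    (hMK : ∀ ε > (0:ℝ), ∃ δ > (0:ℝ), ∀ x y : X,
      R x y → ε ≤ dist x y → dist x y < ε + δ → dist (T x) (T y) < ε)
    (u v : X) (huv : R u v) :
    Tendsto (fun n : ℕ => dist (T^[n] u) (T^[n] v)) atTop (nhds 0) := by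
  set g : ℕ → ℝ := fun n => dist (T^[n] u) (T^[n] v) with hg
  have hRn := aux_rel R T hpres huv
  have hanti : Antitone g := by
    apply antitone_nat_of_succ_le
    intro n
    have := aux_le R T hMK _ _ (hRn n)
    simpa [hg, Function.iterate_succ_apply'] using this
  have hbdd : BddBelow (Set.range g) := ⟨0, fun x ⟨n, hn⟩ => hn ▸ dist_nonneg⟩
  have htend : Tendsto g atTop (nhds (⨅ n, g n)) := tendsto_atTop_ciInf hanti hbdd
  have hinf0 : (⨅ n, g n) = 0 := by
    have h0le : 0 ≤ ⨅ n, g n := le_ciInf fun n => dist_nonneg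
    rcases h0le.lt_or_eq with hlt | heq
    · exfalso
      obtain ⟨δ, hδ, hmk⟩ := hMK _ hlt
      obtain ⟨n, hn⟩ := exists_lt_of_ciInf_lt (by linarith : (⨅ n, g n) < (⨅ n, g n) + δ)
      have h1 : (⨅ n, g n) ≤ g n := ciInf_le hbdd n
      have h2 : dist (T (T^[n] u)) (T (T^[n] v)) < ⨅ n, g n := hmk _ _ (hRn n) h1 hn
      have h3 : (⨅ n, g n) ≤ g (n+1) := ciInf_le hbdd (n+1)
      rw [hg] at h3
      simp only [Function.iterate_succ_apply'] at h3
      linarith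
    · exact heq.symm
  rwa [hinf0] at htend
end Aux

theorem stmt_15 {X : Type*} [MetricSpace X] [CompleteSpace X]
    (R : X → X → Prop) (N : ℕ) (hN : 1 ≤ N)
    (htrans : ∀ z : ℕ → X, (∀ i ≤ N, R (z i) (z (i + 1))) → R (z 0) (z (N + 1)))
    (T : X → X)
    (hpres : ∀ x y : X, R x y → R (T x) (T y))
    (hMK : ∀ ε > (0:ℝ), ∃ δ > (0:ℝ), ∀ x y : X,
      R x y → ε ≤ dist x y → dist x y < ε + δ → dist (T x) (T y) < ε)
    (x₀ : X) (hx₀ : R x₀ (T x₀))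
    (hreg : ∀ (x0 x : X), (∀ n : ℕ, R (T^[n] x0) (T^[n + 1] x0)) →
      Tendsto (fun n : ℕ => T^[n] x0) atTop (nhds x) →
      ∃ φ : ℕ → ℕ, StrictMono φ ∧ ∀ k : ℕ, R (T^[φ k] x0) x)
    (hconn : ∀ x y : X, x ≠ y → ∃ (n : ℕ) (z : ℕ → X), z 0 = x ∧ z n = y ∧
      ∀ i < n, R (z i) (z (i + 1)) ∨ R (z (i + 1)) (z i)) :
    ∃ xs : X, T xs = xs ∧ (∀ y : X, T y = y → y = xs) ∧
      ∀ x : X, Tendsto (fun n : ℕ => T^[n] x) atTop (nhds xs) := by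
  have hle := aux_le R T hMK
  -- orbit relation
  have hRf : ∀ n : ℕ, R (T^[n] x₀) (T^[n+1] x₀) := by
    intro n
    have := aux_rel R T hpres hx₀ n
    rwa [← Function.iterate_succ_apply] at this
  -- jump relation: R (T^[n] x₀) (T^[n + (1 + k*N)] x₀)
  have hjump : ∀ n k : ℕ, R (T^[n] x₀) (T^[n + (1 + k*N)] x₀) := by
    intro n k
    induction k with
    | zero => simpa using hRf n
    | succ k ih =>
      set z : ℕ → X := fun i => if i = 0 then T^[n] x₀ else T^[n + k*N + i] x₀ with hzdef
      have hrel : ∀ i ≤ N, R (z i) (z (i+1)) := by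
        intro i hi
        rcases Nat.eq_zero_or_pos i with rfl | hipos
        · have e0 : z 0 = T^[n] x₀ := if_pos rfl
          have e1 : z 1 = T^[n + k*N + 1] x₀ := if_neg Nat.one_ne_zero
          rw [e0, e1]
          have he : n + k*N + 1 = n + (1 + k*N) := by ring
          rw [he]; exact ih
        · have h1 : i ≠ 0 := Nat.pos_iff_ne_zero.mp hipos
          have e0 : z i = T^[n + k*N + i] x₀ := if_neg h1
          have e1 : z (i+1) = T^[n + k*N + (i+1)] x₀ := if_neg (Nat.succ_ne_zero i)
          rw [e0, e1]
          have he : n + k*N + (i+1) = (n + k*N + i) + 1 := by ring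
          rw [he]; exact hRf _
      have hz := htrans z hrel
      have e0 : z 0 = T^[n] x₀ := if_pos rfl
      have e1 : z (N+1) = T^[n + k*N + (N+1)] x₀ := if_neg (Nat.succ_ne_zero N)
      rw [e0, e1] at hz
      have he : n + k*N + (N+1) = n + (1 + (k+1)*N) := by ring
      rwa [he] at hz
  -- consecutive distances tend to zero
  have hd0 : Tendsto (fun n : ℕ => dist (T^[n] x₀) (T^[n+1] x₀)) atTop (nhds 0) := by
    have h := aux_tendsto_zero R T hpres hMK x₀ (T x₀) hx₀
    have heq : (fun n : ℕ => dist (T^[n] x₀) (T^[n] (T x₀)))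
        = fun n : ℕ => dist (T^[n] x₀) (T^[n+1] x₀) := by
      funext n; rw [← Function.iterate_succ_apply]
    rwa [heq] at h
  obtain ⟨M, rfl⟩ : ∃ M, N = M + 1 := ⟨N - 1, by omega⟩
  -- Cauchy
  have hcauchy : CauchySeq (fun n : ℕ => T^[n] x₀) := by
    rw [Metric.cauchySeq_iff']
    intro ε₀ hε₀
    have hεpos : 0 < ε₀/3 := by positivity
    set ε := ε₀/3 with hεdef
    obtain ⟨δ₁, hδ₁, hMKε⟩ := hMK ε hεpos
    set δ := min δ₁ ε with hδdef
    have hδpos : 0 < δ := lt_min hδ₁ hεpos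
    have hδε : δ ≤ ε := min_le_right _ _
    have hMK' : ∀ x y : X, R x y → ε ≤ dist x y → dist x y < ε + δ → dist (T x) (T y) < ε := by
      intro x y h h1 h2
      exact hMKε x y h h1 (h2.trans_le (by have := min_le_left δ₁ ε; linarith))
    set δ' := δ / (M+1) with hδ'def
    have hδ'pos : 0 < δ' := by positivity
    have hδ'sum : ((M:ℝ)+1) * δ' = δ := by
      rw [hδ'def]
      have hne : ((M:ℝ)+1) ≠ 0 := by positivity
      field_simp
    have hδ'le : δ' ≤ δ := by
      have hM0 : (0:ℝ) ≤ (M:ℝ) * δ' := mul_nonneg (by positivity) hδ'pos.le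
      linarith [hδ'sum]
    obtain ⟨m, hm⟩ : ∃ m, ∀ j ≥ m, dist (T^[j] x₀) (T^[j+1] x₀) < δ' := by
      have := (Metric.tendsto_atTop.mp hd0) δ' hδ'pos
      obtain ⟨m, hm⟩ := this
      exact ⟨m, fun j hj => by
        have := hm j hj
        rwa [Real.dist_eq, sub_zero, abs_of_nonneg dist_nonneg] at this⟩
    -- chain sum estimate
    have hchain : ∀ a, m ≤ a → ∀ t : ℕ, dist (T^[a] x₀) (T^[a + t] x₀) ≤ t * δ' := by
      intro a ha t
      induction t with
      | zero => simp
      | succ t ih =>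
        have he : a + (t+1) = (a+t)+1 := by ring
        calc dist (T^[a] x₀) (T^[a + (t+1)] x₀)
            ≤ dist (T^[a] x₀) (T^[a+t] x₀) + dist (T^[a+t] x₀) (T^[(a+t)+1] x₀) := by
              rw [he]; exact dist_triangle _ _ _
          _ ≤ t * δ' + δ' := add_le_add ih (le_of_lt (hm (a+t) (by omega)))
          _ = (↑(t+1) : ℝ) * δ' := by push_cast; ring
    -- main induction
    have hA : ∀ k : ℕ, dist (T^[m] x₀) (T^[m + (1 + k*(M+1))] x₀) < ε + δ := by
      intro k
      induction k with
      | zero =>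
        have := hm m le_rfl
        have he : m + (1 + 0*(M+1)) = m + 1 := by ring
        rw [he]; linarith [hδ'le]
      | succ k ih =>
        have hR := hjump m k
        have hstep : dist (T^[m+1] x₀) (T^[m + (1 + k*(M+1)) + 1] x₀) < ε := by
          have h1 : dist (T (T^[m] x₀)) (T (T^[m + (1 + k*(M+1))] x₀)) < ε := by
            rcases lt_or_ge (dist (T^[m] x₀) (T^[m + (1 + k*(M+1))] x₀)) ε with h | h
            · exact lt_of_le_of_lt (hle _ _ hR) h
            · exact hMK' _ _ hR h ih
          simpa [← Function.iterate_succ_apply' T] using h1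
        have he2 : m + (1 + (k+1)*(M+1)) = (m + (1 + k*(M+1)) + 1) + M := by ring
        have hc := hchain (m + (1 + k*(M+1)) + 1) (by omega) M
        calc dist (T^[m] x₀) (T^[m + (1 + (k+1)*(M+1))] x₀)
            ≤ dist (T^[m] x₀) (T^[m+1] x₀) + dist (T^[m+1] x₀) (T^[m + (1 + k*(M+1)) + 1] x₀)
              + dist (T^[m + (1 + k*(M+1)) + 1] x₀) (T^[m + (1 + (k+1)*(M+1))] x₀) := by
              rw [he2]; exact dist_triangle4 _ _ _ _
          _ < δ' + ε + M * δ' := by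
              rw [he2]
              have hmm := hm m le_rfl
              linarith [hstep, hc]
          _ ≤ ε + δ := by
              have : δ' + (M:ℝ) * δ' = δ := by rw [← hδ'sum]; ring
              linarith
    refine ⟨m, ?_⟩
    intro n hn
    rcases eq_or_lt_of_le hn with rfl | hlt
    · simpa using hε₀
    · have hq : ∃ k r : ℕ, r ≤ M ∧ n = m + (1 + k*(M+1)) + r := by
        obtain ⟨k, r, hr, he⟩ : ∃ k r : ℕ, r < M+1 ∧ n - m - 1 = k*(M+1)+r :=
          ⟨(n - m - 1) / (M+1), (n - m - 1) % (M+1),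
            Nat.mod_lt _ (by omega), (Nat.div_add_mod' (n-m-1) (M+1)).symm⟩
        exact ⟨k, r, by omega, by omega⟩
      obtain ⟨k, r, hr, rfl⟩ := hq
      have h1 := hA k
      have h2 := hchain (m + (1 + k*(M+1))) (by omega) r
      have h3 : (r:ℝ) * δ' ≤ ((M:ℝ)+1) * δ' := by
        apply mul_le_mul_of_nonneg_right _ (le_of_lt hδ'pos)
        exact_mod_cast Nat.le_succ_of_le hr
      rw [dist_comm]
      calc dist (T^[m] x₀) (T^[m + (1 + k*(M+1)) + r] x₀)
          ≤ dist (T^[m] x₀) (T^[m + (1 + k*(M+1))] x₀)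
            + dist (T^[m + (1 + k*(M+1))] x₀) (T^[m + (1 + k*(M+1)) + r] x₀) := dist_triangle _ _ _
        _ < (ε + δ) + ((M:ℝ)+1) * δ' := by linarith
        _ = ε + δ + δ := by rw [hδ'sum]
        _ ≤ ε₀ := by
            have h := hεdef
            linarith [hδε]
  obtain ⟨xs, hxs⟩ := cauchySeq_tendsto_of_complete hcauchy
  -- fixed point
  have hTxs : T xs = xs := by
    obtain ⟨φ, hφ, hRφ⟩ := hreg x₀ xs hRf hxs
    have h1 : Tendsto (fun k => T^[φ k] x₀) atTop (nhds xs) := hxs.comp hφ.tendsto_atTop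
    have h2 : Tendsto (fun k => T^[φ k + 1] x₀) atTop (nhds xs) := by
      exact hxs.comp (tendsto_atTop_mono (fun k => Nat.le_succ _) hφ.tendsto_atTop)
    have h3 : Tendsto (fun k => T^[φ k + 1] x₀) atTop (nhds (T xs)) := by
      have hd : ∀ k, dist (T^[φ k + 1] x₀) (T xs) ≤ dist (T^[φ k] x₀) xs := by
        intro k
        have := hle _ _ (hRφ k)
        simpa [← Function.iterate_succ_apply' T] using this
      have hd0' : Tendsto (fun k => dist (T^[φ k] x₀) xs) atTop (nhds 0) :=
        tendsto_iff_dist_tendsto_zero.mp h1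
      exact tendsto_iff_dist_tendsto_zero.mpr
        (squeeze_zero (fun k => dist_nonneg) hd hd0')
    exact tendsto_nhds_unique h3 h2
  have hfix : ∀ j : ℕ, T^[j] xs = xs := fun j => Function.iterate_fixed hTxs j
  -- convergence for all x
  have hconv : ∀ x : X, Tendsto (fun n : ℕ => T^[n] x) atTop (nhds xs) := by
    intro x
    rcases eq_or_ne x xs with rfl | hne
    · simpa [hfix] using (tendsto_const_nhds : Tendsto (fun _ : ℕ => xs) atTop (nhds xs))
    obtain ⟨n, z, hz0, hzn, hzrel⟩ := hconn xs x (Ne.symm hne)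
    have key : ∀ i, i ≤ n → Tendsto (fun j : ℕ => dist (T^[j] (z 0)) (T^[j] (z i))) atTop (nhds 0) := by
      intro i
      induction i with
      | zero => intro _; simpa using (tendsto_const_nhds : Tendsto (fun _ : ℕ => (0:ℝ)) atTop (nhds 0))
      | succ i ih =>
        intro hi
        have hzero_i := ih (by omega)
        have hpair : Tendsto (fun j : ℕ => dist (T^[j] (z i)) (T^[j] (z (i+1)))) atTop (nhds 0) := by
          rcases hzrel i (by omega) with h | h
          · exact aux_tendsto_zero R T hpres hMK _ _ h
          · have := aux_tendsto_zero R T hpres hMK _ _ h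
            simpa [dist_comm] using this
        have hsum := hzero_i.add hpair
        refine squeeze_zero (fun j => dist_nonneg) (fun j => dist_triangle _ _ _) (by simpa using hsum)
    have hfin := key n le_rfl
    rw [hz0, hzn] at hfin
    simp only [hfix] at hfin
    rw [tendsto_iff_dist_tendsto_zero]
    simpa [dist_comm] using hfin
  refine ⟨xs, hTxs, ?_, hconv⟩
  intro y hy
  have h1 : Tendsto (fun n : ℕ => T^[n] y) atTop (nhds xs) := hconv y
  have h2 : (fun n : ℕ => T^[n] y) = fun _ => y := by
    funext n; exact Function.iterate_fixed hy n
  rw [h2] at h1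
  exact tendsto_nhds_unique tendsto_const_nhds h1
end

section
/- Let (X,d) be a complete metric space, A₁, …, A_N nonempty closed subsets of X, and T : X → X with T(Aᵢ) ⊆ Aᵢ₊₁ for all i (A_{N+1} = A₁). Suppose that for every ε > 0 there exists δ > 0 such that for all i and all x ∈ Aᵢ, y ∈ Aᵢ₊₁ with ε ≤ d(x,y) < ε + δ, one has d(Tx,Ty) < ε. Then ⋂ᵢ Aᵢ is nonempty, T has a fixed point x* ∈ ⋂ᵢ Aᵢ, x* is the unique fixed point of T in ⋃ᵢ Aᵢ, and Tⁿx → x* for all x ∈ ⋃ᵢ Aᵢ. -/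
/-!
Along an orbit `x_n = Tⁿ x₀`, the points `x_n` and `x_{n+kN+1}` lie in adjacent sets, where the
Meir–Keeler condition applies. Distances between parallel orbits in adjacent sets decrease, and
the Meir–Keeler condition forces their limit to be `0`. The orbit is Cauchy because a jump of
length `kN + 1` far out along it stays below `ε` by induction on `k`, the `δ`-margin absorbing
`N` small steps. The limit is visited by the orbit in every `Aᵢ`, hence lies in `⋂ Aᵢ` and is
adjacent to every point of `⋃ Aᵢ`; this makes it a fixed point, unique, and attracting.
-/

open Filter Topology

theorem dist_le_mul_of_dist_succ_le_s16 {X : Type*} [PseudoMetricSpace X] {u : ℕ → X} {n₀ : ℕ}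
    {η : ℝ} (h : ∀ n ≥ n₀, dist (u n) (u (n + 1)) ≤ η) {n : ℕ} (hn : n₀ ≤ n) (j : ℕ) :
    dist (u n) (u (n + j)) ≤ j * η := by
  induction j with
  | zero => simp
  | succ j ih =>
    calc dist (u n) (u (n + (j + 1)))
        ≤ dist (u n) (u (n + j)) + dist (u (n + j)) (u (n + j + 1)) := dist_triangle _ _ _
      _ ≤ j * η + η := add_le_add ih (h _ (by omega))
      _ = (j + 1 : ℕ) * η := by push_cast; ring

section MeirKeeler

variable {X : Type*} [MetricSpace X]

def IsMeirKeelerOn (R : X → X → Prop) (T : X → X) : Prop :=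
  ∀ ε > (0 : ℝ), ∃ δ > (0 : ℝ), ∀ x y, R x y →
    ε ≤ dist x y → dist x y < ε + δ → dist (T x) (T y) < ε

namespace IsMeirKeelerOn

variable {R : X → X → Prop} {T : X → X}

theorem dist_map_lt (hT : IsMeirKeelerOn R T) {x y : X} (hxy : R x y) (hne : x ≠ y) :
    dist (T x) (T y) < dist x y := by
  obtain ⟨δ, hδ, h⟩ := hT _ (dist_pos.2 hne)
  exact h x y hxy le_rfl (lt_add_of_pos_right _ hδ)

theorem dist_map_le (hT : IsMeirKeelerOn R T) {x y : X} (hxy : R x y) :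
    dist (T x) (T y) ≤ dist x y := by
  rcases eq_or_ne x y with rfl | hne
  · simp
  · exact (hT.dist_map_lt hxy hne).le

theorem exists_dist_map_lt (hT : IsMeirKeelerOn R T) {ε : ℝ} (hε : 0 < ε) :
    ∃ δ > 0, ∀ x y, R x y → dist x y < ε + δ → dist (T x) (T y) < ε := by
  obtain ⟨δ, hδ, h⟩ := hT ε hε
  refine ⟨δ, hδ, fun x y hxy hlt => ?_⟩
  rcases lt_or_ge (dist x y) ε with hsmall | hlarge
  · exact (hT.dist_map_le hxy).trans_lt hsmall
  · exact h x y hxy hlarge hlt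

theorem eq_of_isFixedPt (hT : IsMeirKeelerOn R T) {x y : X} (hxy : R x y)
    (hx : T x = x) (hy : T y = y) : x = y := by
  by_contra hne
  simpa [hx, hy] using hT.dist_map_lt hxy hne

theorem tendsto_dist_iterate (hT : IsMeirKeelerOn R T) {x y : X}
    (hR : ∀ n, R (T^[n] x) (T^[n] y)) :
    Tendsto (fun n => dist (T^[n] x) (T^[n] y)) atTop (𝓝 0) := by
  set d : ℕ → ℝ := fun n => dist (T^[n] x) (T^[n] y)
  have hsucc : ∀ n, d (n + 1) = dist (T (T^[n] x)) (T (T^[n] y)) := fun n => by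
    simp only [d, Function.iterate_succ_apply']
  have hanti : Antitone d :=
    antitone_nat_of_succ_le fun n => (hsucc n).trans_le (hT.dist_map_le (hR n))
  obtain ⟨L, hL⟩ : ∃ L, Tendsto d atTop (𝓝 L) :=
    ⟨_, tendsto_atTop_ciInf hanti ⟨0, by rintro _ ⟨n, rfl⟩; exact dist_nonneg⟩⟩
  obtain rfl | hLpos := (ge_of_tendsto' hL fun n => dist_nonneg).eq_or_lt
  · exact hL
  obtain ⟨δ, hδ, h⟩ := hT.exists_dist_map_lt hLpos
  obtain ⟨n, hn⟩ := (hL.eventually (gt_mem_nhds (lt_add_of_pos_right L hδ))).exists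
  have := hanti.le_of_tendsto hL (n + 1)
  linarith [hsucc n ▸ h _ _ (hR n) hn]

theorem isFixedPt_of_tendsto_iterate (hT : IsMeirKeelerOn R T) {x z : X}
    (hR : ∀ n, R (T^[n] x) z) (hx : Tendsto (fun n => T^[n] x) atTop (𝓝 z)) :
    T z = z := by
  have hmap : Tendsto (fun n => T (T^[n] x)) atTop (𝓝 (T z)) :=
    tendsto_iff_dist_tendsto_zero.2 <| squeeze_zero (fun _ => dist_nonneg)
      (fun n => hT.dist_map_le (hR n)) (tendsto_iff_dist_tendsto_zero.1 hx)
  refine tendsto_nhds_unique hmap ?_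
  simpa only [Function.comp_def, Function.iterate_succ_apply'] using
    hx.comp (tendsto_add_atTop_nat 1)

theorem tendsto_iterate_of_isFixedPt (hT : IsMeirKeelerOn R T) {x z : X}
    (hR : ∀ n, R (T^[n] x) z) (hz : T z = z) :
    Tendsto (fun n => T^[n] x) atTop (𝓝 z) := by
  have hiter : ∀ n, T^[n] z = z := Function.iterate_fixed hz
  rw [tendsto_iff_dist_tendsto_zero]
  simpa only [hiter] using hT.tendsto_dist_iterate (y := z) (by simpa only [hiter] using hR)


theorem eventually_dist_iterate_succ_le (hT : IsMeirKeelerOn R T) {x : X}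
    (hR : ∀ n, R (T^[n] x) (T^[n + 1] x)) {η : ℝ} (hη : 0 < η) :
    ∀ᶠ n in atTop, dist (T^[n] x) (T^[n + 1] x) ≤ η := by
  have h := hT.tendsto_dist_iterate (y := T x)
    (by simpa only [← Function.iterate_succ_apply] using hR)
  simpa only [← Function.iterate_succ_apply] using h.eventually (ge_mem_nhds hη)

theorem exists_forall_dist_iterate_lt (hT : IsMeirKeelerOn R T) {N : ℕ} (hN : 0 < N) {x : X}
    (hR : ∀ m k, R (T^[m] x) (T^[m + k * N + 1] x)) {ε : ℝ} (hε : 0 < ε) :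
    ∃ m₀, ∀ k, ∀ m ≥ m₀, dist (T^[m] x) (T^[m + k * N + 1] x) < ε := by
  obtain ⟨δ, hδ, hmap⟩ := hT.exists_dist_map_lt hε
  obtain ⟨n₀, hn₀⟩ := eventually_atTop.1 <|
    hT.eventually_dist_iterate_succ_le (by simpa using fun n => hR n 0)
      (div_pos hδ (Nat.cast_pos.2 hN))
  have hmap' : ∀ k n, dist (T^[n] x) (T^[n + k * N + 1] x) < ε + δ →
      dist (T^[n + 1] x) (T^[n + 1 + k * N + 1] x) < ε := fun k n h => by
    rw [show n + 1 + k * N + 1 = n + k * N + 1 + 1 by ring]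
    simpa only [Function.iterate_succ_apply'] using hmap _ _ (hR n k) h
  refine ⟨n₀ + 1, fun k => ?_⟩
  induction k with
  | zero =>
    intro m hm
    obtain ⟨n, hn, rfl⟩ : ∃ n, n₀ ≤ n ∧ m = n + 1 := ⟨m - 1, by omega, by omega⟩
    refine hmap' 0 n ?_
    have hδN : δ / N ≤ δ := div_le_self hδ.le (Nat.one_le_cast.2 hN)
    simpa using (hn₀ n hn).trans_lt (by linarith)
  | succ k ih =>
    intro m hm
    obtain ⟨n, hn, rfl⟩ : ∃ n, n₀ ≤ n ∧ m = n + 1 := ⟨m - 1, by omega, by omega⟩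
    -- `N` steps of size `≤ δ / N`, then a jump of length `k * N + 1`, `< ε` by induction
    refine hmap' (k + 1) n ?_
    have hfirst := dist_le_mul_of_dist_succ_le_s16 hn₀ hn N
    rw [mul_div_cancel₀ _ (Nat.cast_ne_zero.2 hN.ne')] at hfirst
    have hrest := ih (n + N) (by omega)
    rw [show n + N + k * N + 1 = n + (k + 1) * N + 1 by ring] at hrest
    calc dist (T^[n] x) (T^[n + (k + 1) * N + 1] x)
        ≤ dist (T^[n] x) (T^[n + N] x) + dist (T^[n + N] x) (T^[n + (k + 1) * N + 1] x) :=
          dist_triangle _ _ _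
      _ < δ + ε := add_lt_add_of_le_of_lt hfirst hrest
      _ = ε + δ := add_comm _ _

theorem cauchySeq_iterate (hT : IsMeirKeelerOn R T) {N : ℕ} (hN : 0 < N) {x : X}
    (hR : ∀ m k, R (T^[m] x) (T^[m + k * N + 1] x)) :
    CauchySeq fun n => T^[n] x := by
  refine Metric.cauchySeq_iff'.2 fun ε hε => ?_
  have hNpos : (0 : ℝ) < N := Nat.cast_pos.2 hN
  obtain ⟨m₀, hm₀⟩ := hT.exists_forall_dist_iterate_lt hN hR (half_pos hε)
  obtain ⟨n₁, hn₁⟩ := eventually_atTop.1 <| hT.eventually_dist_iterate_succ_le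
    (by simpa using fun n => hR n 0) (div_pos hε (mul_pos two_pos hNpos))
  refine ⟨max m₀ n₁, fun n hn => ?_⟩
  obtain ⟨p, rfl⟩ := Nat.exists_eq_add_of_le hn
  rw [dist_comm]
  rcases p with _ | p
  · simpa using hε
  set M := max m₀ n₁
  have hsplit : M + (p + 1) = M + p % N + p / N * N + 1 := by
    linarith [Nat.mod_add_div' p N]
  have hsteps : dist (T^[M] x) (T^[M + p % N] x) < ε / 2 := by
    have hr : ((p % N : ℕ) : ℝ) < N := Nat.cast_lt.2 (Nat.mod_lt p hN)
    calc dist (T^[M] x) (T^[M + p % N] x) ≤ (p % N : ℕ) * (ε / (2 * N)) :=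
          dist_le_mul_of_dist_succ_le_s16 hn₁ (le_max_right _ _) _
      _ < N * (ε / (2 * N)) := mul_lt_mul_of_pos_right hr (by positivity)
      _ = ε / 2 := by field_simp
  calc dist (T^[M] x) (T^[M + (p + 1)] x)
      ≤ dist (T^[M] x) (T^[M + p % N] x)
        + dist (T^[M + p % N] x) (T^[M + p % N + p / N * N + 1] x) := by
        rw [hsplit]; exact dist_triangle _ _ _
    _ < ε / 2 + ε / 2 := add_lt_add hsteps (hm₀ _ _ (by omega))
    _ = ε := add_halves ε

end IsMeirKeelerOn

end MeirKeeler

open Fin.NatCast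

section Cyclic

variable {X : Type*} {N : ℕ} [NeZero N] {A : Fin N → Set X} {T : X → X}

def CyclicallyAdjacent (A : Fin N → Set X) (x y : X) : Prop :=
  ∃ i, x ∈ A i ∧ y ∈ A (i + 1)

theorem iterate_mem_add (hcyc : ∀ i : Fin N, ∀ x ∈ A i, T x ∈ A (i + 1)) {i : Fin N} {x : X}
    (hx : x ∈ A i) (n : ℕ) : T^[n] x ∈ A (i + n) := by
  induction n with
  | zero => simpa using hx
  | succ n ih =>
    rw [Function.iterate_succ_apply', Nat.cast_succ, ← add_assoc]
    exact hcyc _ _ ih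

theorem cyclicallyAdjacent_iterate (hcyc : ∀ i : Fin N, ∀ x ∈ A i, T x ∈ A (i + 1))
    {i : Fin N} {x : X} (hx : x ∈ A i) (m k : ℕ) :
    CyclicallyAdjacent A (T^[m] x) (T^[m + k * N + 1] x) := by
  refine ⟨i + m, iterate_mem_add hcyc hx m, ?_⟩
  have hkN : ((k * N : ℕ) : Fin N) = 0 := by simp
  simpa [add_assoc, hkN] using iterate_mem_add hcyc hx (m + k * N + 1)

theorem forall_mem_of_tendsto_iterate [TopologicalSpace X] (hcl : ∀ i, IsClosed (A i))
    (hcyc : ∀ i : Fin N, ∀ x ∈ A i, T x ∈ A (i + 1)) {i : Fin N} {x z : X} (hx : x ∈ A i)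
    (hz : Tendsto (fun n => T^[n] x) atTop (𝓝 z)) (j : Fin N) : z ∈ A j := by
  refine (hcl j).mem_of_frequently_of_tendsto (frequently_atTop.2 fun a => ?_) hz
  refine ⟨(j - i).val + a * N, by nlinarith [NeZero.one_le (n := N)], ?_⟩
  have haN : ((a * N : ℕ) : Fin N) = 0 := by simp
  simpa [haN] using iterate_mem_add hcyc hx ((j - i).val + a * N)

end Cyclic

theorem stmt_16 {X : Type*} [MetricSpace X] [CompleteSpace X]
    (N : ℕ) [NeZero N] (A : Fin N → Set X)
    (hne : ∀ i, (A i).Nonempty) (hcl : ∀ i, IsClosed (A i))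
    (T : X → X) (hcyc : ∀ i : Fin N, ∀ x ∈ A i, T x ∈ A (i + 1))
    (hMK : ∀ ε > (0:ℝ), ∃ δ > (0:ℝ), ∀ i : Fin N, ∀ x ∈ A i, ∀ y ∈ A (i + 1),
      ε ≤ dist x y → dist x y < ε + δ → dist (T x) (T y) < ε) :
    (⋂ i, A i).Nonempty ∧
    ∃ xs : X, xs ∈ ⋂ i, A i ∧ T xs = xs ∧
      (∀ y ∈ ⋃ i, A i, T y = y → y = xs) ∧
      ∀ x ∈ ⋃ i, A i, Tendsto (fun n : ℕ => T^[n] x) atTop (nhds xs) := by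
  have hT : IsMeirKeelerOn (CyclicallyAdjacent A) T := fun ε hε =>
    (hMK ε hε).imp fun _ ⟨hδ, h⟩ => ⟨hδ, fun x y ⟨i, hx, hy⟩ => h i x hx y hy⟩
  obtain ⟨x₀, hx₀⟩ := hne 0
  obtain ⟨xs, hlim⟩ := cauchySeq_tendsto_of_complete <|
    hT.cauchySeq_iterate (Nat.pos_of_neZero N) (cyclicallyAdjacent_iterate hcyc hx₀)
  have hmem : ∀ j, xs ∈ A j := forall_mem_of_tendsto_iterate hcl hcyc hx₀ hlim
  have hadj : ∀ {i x}, x ∈ A i → ∀ n, CyclicallyAdjacent A (T^[n] x) xs :=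
    fun hx n => ⟨_, iterate_mem_add hcyc hx n, hmem _⟩
  have hfix : T xs = xs := hT.isFixedPt_of_tendsto_iterate (hadj hx₀) hlim
  refine ⟨⟨xs, Set.mem_iInter.2 hmem⟩, xs, Set.mem_iInter.2 hmem, hfix, ?_, ?_⟩
  · rintro y ⟨_, ⟨i, rfl⟩, hy⟩ hTy
    exact hT.eq_of_isFixedPt (hadj hy 0) hTy hfix
  · rintro x ⟨_, ⟨i, rfl⟩, hx⟩
    exact hT.tendsto_iterate_of_isFixedPt (hadj hx) hfix
end

section
/- Let (X,d) be a complete metric space, ⪯ a partial order on X, and T : X → X nondecreasing, such that for all ε > 0 there exists δ > 0 with: x ⪯ y and ε ≤ d(x,y) < ε + δ implies d(Tx,Ty) < ε. Assume there is x₀ with x₀ ⪯ Tx₀ and for every nondecreasing sequence {xₙ} converging to x, there is a subsequence {x_{n(k)}} with x_{n(k)} ⪯ x for all k. If moreover X is ⪯-connected, then T has a unique fixed point x* and Tⁿx → x* for every x ∈ X. -/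
open Filter

theorem stmt_17 {X : Type*} [MetricSpace X] [CompleteSpace X] [PartialOrder X]
    (T : X → X) (hmono : Monotone T)
    (hMK : ∀ ε > (0:ℝ), ∃ δ > (0:ℝ), ∀ x y : X,
      x ≤ y → ε ≤ dist x y → dist x y < ε + δ → dist (T x) (T y) < ε)
    (x₀ : X) (hx₀ : x₀ ≤ T x₀)
    (hreg : ∀ (u : ℕ → X) (x : X), Monotone u → Tendsto u atTop (nhds x) →
      ∃ φ : ℕ → ℕ, StrictMono φ ∧ ∀ k : ℕ, u (φ k) ≤ x)
    (hconn : ∀ x y : X, ∃ (n : ℕ) (z : ℕ → X), z 0 = x ∧ z n = y ∧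
      ∀ i < n, z i ≤ z (i + 1) ∨ z (i + 1) ≤ z i) :
    ∃ xs : X, T xs = xs ∧ (∀ y : X, T y = y → y = xs) ∧
      ∀ x : X, Tendsto (fun n : ℕ => T^[n] x) atTop (nhds xs) := by
  -- T is nonexpansive on comparable pairs
  have lemA : ∀ a b : X, a ≤ b → dist (T a) (T b) ≤ dist a b := by
    intro a b hab
    rcases eq_or_ne a b with rfl | hne
    · simp
    · have hd : 0 < dist a b := dist_pos.2 hne
      obtain ⟨δ, hδ, hMK'⟩ := hMK (dist a b) hd
      exact le_of_lt (hMK' a b hab le_rfl (lt_add_of_pos_right _ hδ))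
  have iterLE : ∀ (n : ℕ) (a b : X), a ≤ b → T^[n] a ≤ T^[n] b :=
    fun n a b h => hmono.iterate n h
  -- distance of iterates of comparable points tends to 0
  have lemB : ∀ a b : X, a ≤ b →
      Tendsto (fun n => dist (T^[n] a) (T^[n] b)) atTop (nhds 0) := by
    intro a b hab
    set f : ℕ → ℝ := fun n => dist (T^[n] a) (T^[n] b) with hf
    have hanti : Antitone f := by
      apply antitone_nat_of_succ_le
      intro n
      simp only [hf, Function.iterate_succ_apply']
      exact lemA _ _ (iterLE n a b hab)
    have hbdd : BddBelow (Set.range f) := ⟨0, by rintro _ ⟨n, rfl⟩; exact dist_nonneg⟩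
    have htend : Tendsto f atTop (nhds (⨅ n, f n)) := tendsto_atTop_ciInf hanti hbdd
    rcases eq_or_lt_of_le (le_ciInf (fun n => dist_nonneg : ∀ n, (0:ℝ) ≤ f n)) with heq | hlt
    · rwa [← heq] at htend
    · exfalso
      obtain ⟨δ, hδ, hMK'⟩ := hMK _ hlt
      obtain ⟨n, hn⟩ := (htend.eventually (gt_mem_nhds (lt_add_of_pos_right _ hδ))).exists
      have h1 : (⨅ n, f n) ≤ f n := ciInf_le hbdd n
      have h2 := hMK' (T^[n] a) (T^[n] b) (iterLE n a b hab) h1 hn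
      have h3 : (⨅ n, f n) ≤ f (n+1) := ciInf_le hbdd (n+1)
      simp only [hf, Function.iterate_succ_apply'] at h3
      exact absurd h2 (not_lt.2 h3)
  have lemB' : ∀ a b : X, (a ≤ b ∨ b ≤ a) →
      Tendsto (fun n => dist (T^[n] a) (T^[n] b)) atTop (nhds 0) := by
    intro a b hab
    rcases hab with h | h
    · exact lemB a b h
    · simpa [dist_comm] using lemB b a h
  -- via order-connectedness, this holds for all pairs
  have lemC : ∀ x y : X,
      Tendsto (fun n => dist (T^[n] x) (T^[n] y)) atTop (nhds 0) := by
    intro x y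
    obtain ⟨m, z, hz0, hzm, hcomp⟩ := hconn x y
    have key : ∀ k, k ≤ m →
        Tendsto (fun n => dist (T^[n] x) (T^[n] (z k))) atTop (nhds 0) := by
      intro k hk
      induction k with
      | zero => simp [hz0]
      | succ k ih =>
        have ih' := ih (Nat.le_of_succ_le hk)
        have hcomp' := hcomp k (Nat.lt_of_succ_le hk)
        have h2 := lemB' (z k) (z (k+1)) hcomp'
        apply squeeze_zero (fun n => dist_nonneg)
          (fun n => dist_triangle (T^[n] x) (T^[n] (z k)) (T^[n] (z (k+1))))
        simpa using ih'.add h2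
    have := key m le_rfl
    rwa [hzm] at this
  -- the orbit of x₀
  set u : ℕ → X := fun n => T^[n] x₀ with hu
  have humono : Monotone u := by
    apply monotone_nat_of_le_succ
    intro n
    have : T^[n] x₀ ≤ T^[n] (T x₀) := iterLE n _ _ hx₀
    simpa [hu, Function.iterate_succ_apply] using this
  -- the orbit is Cauchy
  have hC : CauchySeq u := by
    rw [Metric.cauchySeq_iff]
    intro ε hε
    have hε4 : 0 < ε/4 := by linarith
    obtain ⟨δ, hδ, hMK'⟩ := hMK (ε/4) hε4
    set δ' := min δ (ε/4) with hδ'def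
    have hδ' : 0 < δ' := lt_min hδ hε4
    have hd0 : Tendsto (fun n => dist (u n) (u (n+1))) atTop (nhds 0) := by
      have := lemB x₀ (T x₀) hx₀
      simpa [hu, Function.iterate_succ_apply] using this
    obtain ⟨N, hN⟩ := Metric.tendsto_atTop.1 hd0 δ' hδ'
    have hNd : ∀ n ≥ N, dist (u n) (u (n+1)) < δ' := by
      intro n hn
      have := hN n hn
      rwa [Real.dist_eq, sub_zero, abs_of_nonneg dist_nonneg] at this
    have key : ∀ k, dist (u N) (u (N + k)) < ε/4 + δ' := by
      intro k
      induction k with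
      | zero => simpa using (by positivity : (0:ℝ) < ε/4 + δ')
      | succ k ih =>
        rcases lt_or_ge (dist (u N) (u (N+k))) (ε/4) with h | h
        · calc dist (u N) (u (N+k+1))
              ≤ dist (u N) (u (N+k)) + dist (u (N+k)) (u (N+k+1)) := dist_triangle _ _ _
            _ < ε/4 + δ' := by
              have := hNd (N+k) (Nat.le_add_right N k)
              linarith
        · have hle : u N ≤ u (N+k) := humono (Nat.le_add_right N k)
          have hδle : δ' ≤ δ := min_le_left _ _
          have hlt : dist (u N) (u (N+k)) < ε/4 + δ := by linarith
          have h2 := hMK' (u N) (u (N+k)) hle h hlt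
          have hTN : T (u N) = u (N+1) := (Function.iterate_succ_apply' T N x₀).symm
          have hTk : T (u (N+k)) = u (N+k+1) := (Function.iterate_succ_apply' T (N+k) x₀).symm
          rw [hTN, hTk] at h2
          calc dist (u N) (u (N+k+1))
              ≤ dist (u N) (u (N+1)) + dist (u (N+1)) (u (N+k+1)) := dist_triangle _ _ _
            _ < δ' + ε/4 := add_lt_add (hNd N le_rfl) h2
            _ = ε/4 + δ' := add_comm _ _
    refine ⟨N, fun m hm n hn => ?_⟩
    have hm' := key (m - N)
    have hn' := key (n - N)
    rw [Nat.add_sub_cancel' hm] at hm'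
    rw [Nat.add_sub_cancel' hn] at hn'
    have hδ'le : δ' ≤ ε/4 := min_le_right _ _
    calc dist (u m) (u n) ≤ dist (u N) (u m) + dist (u N) (u n) := dist_triangle_left _ _ _
      _ < (ε/4+δ') + (ε/4+δ') := add_lt_add hm' hn'
      _ ≤ ε := by linarith
  obtain ⟨xs, hxs⟩ := cauchySeq_tendsto_of_complete hC
  -- xs is a fixed point
  obtain ⟨φ, hφ, hφle⟩ := hreg u xs humono hxs
  have h1 : Tendsto (fun k => u (φ k + 1)) atTop (nhds xs) :=
    hxs.comp ((tendsto_add_atTop_nat 1).comp hφ.tendsto_atTop)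
  have hfix : T xs = xs := by
    have h2 : ∀ k, dist xs (T xs) ≤ dist xs (u (φ k + 1)) + dist (u (φ k)) xs := by
      intro k
      have h3 : dist (u (φ k + 1)) (T xs) ≤ dist (u (φ k)) xs := by
        have heq : u (φ k + 1) = T (u (φ k)) := Function.iterate_succ_apply' T (φ k) x₀
        rw [heq]
        exact lemA _ _ (hφle k)
      calc dist xs (T xs) ≤ dist xs (u (φ k + 1)) + dist (u (φ k + 1)) (T xs) :=
            dist_triangle _ _ _
        _ ≤ dist xs (u (φ k + 1)) + dist (u (φ k)) xs := by linarith
    have h4 : Tendsto (fun k => dist xs (u (φ k + 1)) + dist (u (φ k)) xs) atTop (nhds 0) := by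
      have t1 : Tendsto (fun k => dist xs (u (φ k + 1))) atTop (nhds 0) := by
        have := tendsto_iff_dist_tendsto_zero.1 h1
        simpa [dist_comm] using this
      have t2 : Tendsto (fun k => dist (u (φ k)) xs) atTop (nhds 0) :=
        tendsto_iff_dist_tendsto_zero.1 (hxs.comp hφ.tendsto_atTop)
      simpa using t1.add t2
    have h5 : dist xs (T xs) ≤ 0 := ge_of_tendsto h4 (Eventually.of_forall h2)
    have h6 : dist xs (T xs) = 0 := le_antisymm h5 dist_nonneg
    exact (dist_eq_zero.1 h6).symm
  -- convergence of every orbit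
  have hconv : ∀ x : X, Tendsto (fun n : ℕ => T^[n] x) atTop (nhds xs) := by
    intro x
    rw [tendsto_iff_dist_tendsto_zero]
    apply squeeze_zero (fun n => dist_nonneg)
      (fun n => dist_triangle (T^[n] x) (u n) xs)
    have t1 := lemC x x₀
    have t2 : Tendsto (fun n => dist (u n) xs) atTop (nhds 0) :=
      tendsto_iff_dist_tendsto_zero.1 hxs
    simpa using t1.add t2
  refine ⟨xs, hfix, fun y hy => ?_, hconv⟩
  have hy' := hconv y
  simp only [Function.iterate_fixed hy] at hy'
  exact tendsto_nhds_unique tendsto_const_nhds hy'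
end

section
/- Let f : [0,1] × ℝ → ℝ be continuous, and let Φ be the class of nondecreasing functions φ : [0,∞) → [0,∞) such that for all ε > 0 there exists δ > 0 with ε ≤ t < ε + δ implying φ(t) < ε. Suppose there exists φ ∈ Φ such that (K1): 0 ≤ f(t,b) − f(t,a) ≤ 9√3·φ(b−a) for all t ∈ [0,1] and a ≤ b; and (K2): there exists x₀ ∈ C([0,1]) with x₀(t) ≤ ∫₀¹ G(t,s) f(s, x₀(s)) ds for all t ∈ [0,1]. Then the integral equation x(t) = ∫₀¹ G(t,s) f(s, x(s)) ds has a unique solution x ∈ C([0,1]) (equivalently, the BVP x''' + f(t,x) = 0, x(0) = x(1) = x''(0) = 0 has a unique solution). -/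
/-!
Write `T x (t) = ∫₀¹ G(t,s) f(s, x(s)) ds`. By (K1), `|f(s,a) - f(s,b)| ≤ 9√3 φ(|a - b|)`, so
`|T x (t) - T y (t)| ≤ 9√3 φ(‖x - y‖) ∫₀¹ G(t,s) ds`, and `∫₀¹ G(t,s) ds = (t - t³)/6 ≤ 1/(9√3)`.
Hence `T` is a φ-contraction of the complete space `C([0,1])`, and by Matkowski's fixed point
theorem it has exactly one fixed point. For that theorem, the iterates `Tⁿ x` form a Cauchy
sequence: once `dist (Tⁿ x) (Tⁿ⁺¹ x) < δ ≤ ε`, the ε-δ condition keeps every later iterate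
within `2ε` of `Tⁿ x`, since a point at distance in `[ε, ε + δ)` from `Tⁿ x` is mapped within
`ε` of `Tⁿ⁺¹ x`.
-/

noncomputable def G (t s : ℝ) : ℝ :=
  if s ≤ t then (1 - t) * (t - s ^ 2) / 2 else t * (1 - s) ^ 2 / 2

open Set unitInterval

theorem continuous_G : Continuous fun p : ℝ × ℝ => G p.1 p.2 :=
  Continuous.if_le (by fun_prop) (by fun_prop) continuous_snd continuous_fst
    (fun p h => by rw [h]; ring)

theorem continuous_G_right (t : ℝ) : Continuous (G t) :=
  continuous_G.comp (Continuous.prodMk_right t)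

theorem G_nonneg {t s : ℝ} (ht : t ∈ I) (hs : s ∈ I) : 0 ≤ G t s := by
  obtain ⟨ht0, ht1⟩ := ht
  obtain ⟨hs0, hs1⟩ := hs
  unfold G
  split_ifs with hst
  · have : s ^ 2 ≤ t := by nlinarith
    have : 0 ≤ 1 - t := by linarith
    have : 0 ≤ t - s ^ 2 := by linarith
    positivity
  · positivity

theorem integral_G {t : ℝ} (ht : t ∈ I) : ∫ s in (0:ℝ)..1, G t s = (t - t ^ 3) / 6 := by
  obtain ⟨ht0, ht1⟩ := ht
  have hleft : ∫ s in (0:ℝ)..t, G t s = (1 - t) * (t * t - t ^ 3 / 3) / 2 := by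
    rw [intervalIntegral.integral_congr (g := fun s => (1 - t) * (t - s ^ 2) / 2) fun s hs => by
      rw [uIcc_of_le ht0] at hs
      simp only [G, if_pos hs.2]]
    rw [intervalIntegral.integral_eq_sub_of_hasDerivAt
      (f := fun s => (1 - t) * (t * s - s ^ 3 / 3) / 2)
      (fun s _ => ((((hasDerivAt_id s).const_mul t).sub
        ((hasDerivAt_pow 3 s).div_const 3)).const_mul (1 - t) |>.div_const 2).congr_deriv
          (by push_cast; ring))
      (by apply Continuous.intervalIntegrable; fun_prop)]
    ring
  have hright : ∫ s in t..1, G t s = t * (1 - t) ^ 3 / 6 := by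
    rw [intervalIntegral.integral_congr (g := fun s => t * (1 - s) ^ 2 / 2) fun s hs => by
      rw [uIcc_of_le ht1] at hs
      rcases hs.1.eq_or_lt with rfl | hts
      · simp only [G, le_refl, if_true]
        ring
      · simp only [G, if_neg hts.not_ge]]
    rw [intervalIntegral.integral_eq_sub_of_hasDerivAt
      (f := fun s => -(t * (1 - s) ^ 3 / 6))
      (fun s _ => (((hasDerivAt_id s).const_sub 1).pow 3 |>.const_mul t |>.div_const 6 |>.neg
        ).congr_deriv (by simp only [id_eq]; push_cast; ring))
      (by apply Continuous.intervalIntegrable; fun_prop)]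
    ring
  rw [← intervalIntegral.integral_add_adjacent_intervals
    ((continuous_G_right t).intervalIntegrable 0 t)
    ((continuous_G_right t).intervalIntegrable t 1), hleft, hright]
  ring

/-- The maximum of `(t - t³) / 6` on `[0, 1]`, attained at `t = 1 / √3`. -/
theorem integral_G_le {t : ℝ} (ht : t ∈ I) : ∫ s in (0:ℝ)..1, G t s ≤ (9 * √3)⁻¹ := by
  have h3 : √3 ^ 2 = 3 := Real.sq_sqrt (by norm_num)
  have hcube : 0 ≤ (√3 * t - 1) ^ 2 * (√3 * t + 2) := by have := ht.1; positivity
  have hexpand : (√3 * t - 1) ^ 2 * (√3 * t + 2) = 3 * √3 * t ^ 3 - 3 * √3 * t + 2 := by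
    linear_combination √3 * t ^ 3 * h3
  rw [integral_G ht, ← one_div, le_div_iff₀ (by positivity)]
  nlinarith

theorem abs_integral_G_mul_le {t : ℝ} (ht : t ∈ I) {u : ℝ → ℝ} (hu : Continuous u) {C : ℝ}
    (hC : ∀ s ∈ I, |u s| ≤ C) : |∫ s in (0:ℝ)..1, G t s * u s| ≤ C / (9 * √3) := by
  have hC0 : 0 ≤ C := (abs_nonneg _).trans (hC 0 unitInterval.zero_mem)
  calc |∫ s in (0:ℝ)..1, G t s * u s|
      ≤ ∫ s in (0:ℝ)..1, |G t s * u s| :=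
        intervalIntegral.abs_integral_le_integral_abs zero_le_one
    _ ≤ ∫ s in (0:ℝ)..1, G t s * C := by
        refine intervalIntegral.integral_mono_on zero_le_one
          (((continuous_G_right t).mul hu).abs.intervalIntegrable _ _)
          (((continuous_G_right t).mul continuous_const).intervalIntegrable _ _) fun s hs => ?_
        rw [abs_mul, abs_of_nonneg (G_nonneg ht hs)]
        exact mul_le_mul_of_nonneg_left (hC s hs) (G_nonneg ht hs)
    _ = (∫ s in (0:ℝ)..1, G t s) * C := intervalIntegral.integral_mul_const C _
    _ ≤ (9 * √3)⁻¹ * C := mul_le_mul_of_nonneg_right (integral_G_le ht) hC0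
    _ = C / (9 * √3) := by ring

/-- Matkowski's condition; the class `Φ` of the statement consists of the monotone such `φ ≥ 0`. -/
def IsMatkowski (φ : ℝ → ℝ) : Prop :=
  ∀ ε > (0:ℝ), ∃ δ > (0:ℝ), ∀ t : ℝ, ε ≤ t → t < ε + δ → φ t < ε

namespace IsMatkowski

variable {X : Type*} [MetricSpace X] {φ : ℝ → ℝ} {T : X → X}

theorem lt_self (hφ : IsMatkowski φ) {t : ℝ} (ht : 0 < t) : φ t < t := by
  obtain ⟨δ, hδ, h⟩ := hφ t ht
  exact h t le_rfl (lt_add_of_pos_right t hδ)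

theorem dist_map_le_dist (hφ : IsMatkowski φ) (hT : ∀ x y, dist (T x) (T y) ≤ φ (dist x y))
    (x y : X) : dist (T x) (T y) ≤ dist x y := by
  rcases eq_or_ne x y with rfl | hxy
  · simp
  · exact (hT x y).trans (hφ.lt_self (dist_pos.mpr hxy)).le

theorem exists_dist_iterate_succ_lt (hφ : IsMatkowski φ)
    (hT : ∀ x y, dist (T x) (T y) ≤ φ (dist x y)) (x : X) {δ : ℝ} (hδ : 0 < δ) :
    ∃ n, dist (T^[n] x) (T^[n + 1] x) < δ := by
  set d : ℕ → ℝ := fun n => dist (T^[n] x) (T^[n + 1] x)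
  have hd : ∀ n, d (n + 1) ≤ φ (d n) := fun n => by
    simpa only [d, Function.iterate_succ_apply'] using hT _ _
  by_contra! hge
  have hbdd : BddBelow (Set.range d) := ⟨0, by rintro _ ⟨n, rfl⟩; exact dist_nonneg⟩
  set L := ⨅ n, d n
  obtain ⟨η, hη, hφL⟩ := hφ L (hδ.trans_le (le_ciInf hge))
  -- Some `d n` lies in the window `[L, L + η)`, and then `d (n + 1) ≤ φ (d n) < L`.
  obtain ⟨n, hn⟩ : ∃ n, d n < L + η := exists_lt_of_ciInf_lt (lt_add_of_pos_right L hη)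
  have := (ciInf_le hbdd (n + 1)).trans (hd n)
  linarith [hφL (d n) (ciInf_le hbdd n) hn]

theorem dist_iterate_lt (hφ : IsMatkowski φ) (hT : ∀ x y, dist (T x) (T y) ≤ φ (dist x y))
    {ε δ : ℝ} (hε : 0 < ε) (hδ : ∀ t, ε ≤ t → t < ε + δ → φ t < ε) {x : X}
    (hx : dist x (T x) < δ) (k : ℕ) : dist x (T^[k] x) < ε + dist x (T x) := by
  induction k with
  | zero => simpa using add_pos_of_pos_of_nonneg hε dist_nonneg
  | succ k ih =>
    have hstep : dist (T x) (T^[k + 1] x) < ε := by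
      rw [Function.iterate_succ_apply']
      rcases lt_or_ge (dist x (T^[k] x)) ε with h | h
      · exact (hφ.dist_map_le_dist hT _ _).trans_lt h
      · exact (hT _ _).trans_lt (hδ _ h (by linarith))
    linarith [dist_triangle x (T x) (T^[k + 1] x)]

theorem cauchySeq_iterate (hφ : IsMatkowski φ) (hT : ∀ x y, dist (T x) (T y) ≤ φ (dist x y))
    (x : X) : CauchySeq fun n => T^[n] x := by
  rw [Metric.cauchySeq_iff']
  intro ε hε
  obtain ⟨δ, hδ, hφε⟩ := hφ (ε / 2) (half_pos hε)
  obtain ⟨N, hN⟩ := hφ.exists_dist_iterate_succ_lt hT x (lt_min hδ (half_pos hε))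
  refine ⟨N, fun n hn => ?_⟩
  obtain ⟨k, rfl⟩ := Nat.exists_eq_add_of_le hn
  have hNx : dist (T^[N] x) (T (T^[N] x)) < min δ (ε / 2) := by
    rwa [← Function.iterate_succ_apply' T N x]
  have := hφ.dist_iterate_lt hT (half_pos hε) hφε (hNx.trans_le (min_le_left _ _)) k
  rw [dist_comm, add_comm N k, Function.iterate_add_apply]
  linarith [min_le_right δ (ε / 2)]

theorem existsUnique_isFixedPt [CompleteSpace X] [Nonempty X] (hφ : IsMatkowski φ)
    (hT : ∀ x y, dist (T x) (T y) ≤ φ (dist x y)) : ∃! x, Function.IsFixedPt T x := by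
  obtain ⟨x₀⟩ := ‹Nonempty X›
  obtain ⟨x, hx⟩ := cauchySeq_tendsto_of_complete (hφ.cauchySeq_iterate hT x₀)
  have hTx : Function.IsFixedPt T x := isFixedPt_of_tendsto_iterate hx
    (LipschitzWith.mk_one (hφ.dist_map_le_dist hT)).continuous.continuousAt
  refine ⟨x, hTx, fun y hy => ?_⟩
  by_contra hne
  have hφyx := hT y x
  rw [hy.eq, hTx.eq] at hφyx
  exact (hφyx.trans_lt (hφ.lt_self (dist_pos.mpr hne))).false

end IsMatkowski

theorem Monotone.abs_sub_le_of_sub_le {g ψ : ℝ → ℝ} (hg : Monotone g)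
    (hψ : ∀ a b, a ≤ b → g b - g a ≤ ψ (b - a)) (a b : ℝ) : |g a - g b| ≤ ψ |a - b| := by
  rcases le_total a b with hab | hba
  · rw [abs_sub_comm, abs_of_nonneg (sub_nonneg.mpr (hg hab)), abs_sub_comm,
      abs_of_nonneg (sub_nonneg.mpr hab)]
    exact hψ a b hab
  · rw [abs_of_nonneg (sub_nonneg.mpr (hg hba)), abs_of_nonneg (sub_nonneg.mpr hba)]
    exact hψ b a hba

noncomputable def greenOperator (f : ℝ → ℝ → ℝ) (x : ℝ → ℝ) (t : ℝ) : ℝ :=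
  ∫ s in (0:ℝ)..1, G t s * f s (x s)

section greenOperator

variable {f : ℝ → ℝ → ℝ}

theorem greenOperator_congr {x y : ℝ → ℝ} (h : EqOn x y I) (t : ℝ) :
    greenOperator f x t = greenOperator f y t :=
  intervalIntegral.integral_congr fun s hs => by
    rw [uIcc_of_le zero_le_one] at hs
    simp only [h hs]

theorem continuous_greenOperator (hf : Continuous fun p : ℝ × ℝ => f p.1 p.2) {x : ℝ → ℝ}
    (hx : Continuous x) : Continuous (greenOperator f x) :=
  intervalIntegral.continuous_parametric_intervalIntegral_of_continuous'
    (continuous_G.mul (hf.comp (continuous_snd.prodMk (hx.comp continuous_snd)))) 0 1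

variable (hf : Continuous fun p : ℝ × ℝ => f p.1 p.2)

/-- `greenOperator f` acting on `C(I, ℝ)`, through the constant extension of `x` outside `I`. -/
noncomputable def greenOperatorOn (x : C(I, ℝ)) : C(I, ℝ) :=
  ⟨fun t => greenOperator f (IccExtend zero_le_one x) t,
    (continuous_greenOperator hf x.continuous.Icc_extend').comp continuous_subtype_val⟩

theorem isFixedPt_greenOperatorOn_restrict {y : ℝ → ℝ} (hy : Continuous y)
    (hfix : ∀ t ∈ I, y t = greenOperator f y t) :
    Function.IsFixedPt (greenOperatorOn hf) (ContinuousMap.restrict I ⟨y, hy⟩) := by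
  ext t
  refine (greenOperator_congr (fun s hs => ?_) t).trans (hfix t t.2).symm
  rw [IccExtend_of_mem _ _ hs]
  rfl

theorem dist_greenOperatorOn_le {φ : ℝ → ℝ} (hφ : MonotoneOn φ (Ici 0))
    (hfφ : ∀ s ∈ I, ∀ a b, |f s a - f s b| ≤ 9 * √3 * φ |a - b|) (x y : C(I, ℝ)) :
    dist (greenOperatorOn hf x) (greenOperatorOn hf y) ≤ φ (dist x y) := by
  set x' := IccExtend zero_le_one x
  set y' := IccExtend zero_le_one y
  have hx' : Continuous x' := x.continuous.Icc_extend'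
  have hy' : Continuous y' := y.continuous.Icc_extend'
  have hdiff : ∀ s ∈ I, |f s (x' s) - f s (y' s)| ≤ 9 * √3 * φ (dist x y) := fun s hs =>
    (hfφ s hs _ _).trans <| mul_le_mul_of_nonneg_left
      (hφ (mem_Ici.mpr (abs_nonneg _)) (mem_Ici.mpr dist_nonneg)
        (by rw [← Real.dist_eq]; exact ContinuousMap.dist_apply_le_dist _)) (by positivity)
  rw [ContinuousMap.dist_le_iff_of_nonempty]
  intro t
  have hsub : greenOperatorOn hf x t - greenOperatorOn hf y t
      = ∫ s in (0:ℝ)..1, G t s * (f s (x' s) - f s (y' s)) := by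
    simp only [mul_sub]
    exact (intervalIntegral.integral_sub
      (((continuous_G_right t).mul (hf.comp (continuous_id.prodMk hx'))).intervalIntegrable _ _)
      (((continuous_G_right t).mul (hf.comp (continuous_id.prodMk hy'))).intervalIntegrable _ _)
      ).symm
  calc dist (greenOperatorOn hf x t) (greenOperatorOn hf y t)
      ≤ 9 * √3 * φ (dist x y) / (9 * √3) := by
        rw [Real.dist_eq, hsub]
        exact abs_integral_G_mul_le t.2
          ((hf.comp (continuous_id.prodMk hx')).sub (hf.comp (continuous_id.prodMk hy'))) hdiff
    _ = φ (dist x y) := by field_simp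

end greenOperator

theorem stmt_19_general (f : ℝ → ℝ → ℝ) (hf : Continuous fun p : ℝ × ℝ => f p.1 p.2)
    (φ : ℝ → ℝ) (hφmono : MonotoneOn φ (Set.Ici 0))
    (hφMK : ∀ ε > (0:ℝ), ∃ δ > (0:ℝ), ∀ t : ℝ, ε ≤ t → t < ε + δ → φ t < ε)
    (hK1 : ∀ t ∈ Set.Icc (0:ℝ) 1, ∀ a b : ℝ, a ≤ b →
      0 ≤ f t b - f t a ∧ f t b - f t a ≤ 9 * Real.sqrt 3 * φ (b - a)) :
    ∃ x : ℝ → ℝ, Continuous x ∧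
      (∀ t ∈ Set.Icc (0:ℝ) 1, x t = ∫ s in (0:ℝ)..1, G t s * f s (x s)) ∧
      ∀ y : ℝ → ℝ, Continuous y →
        (∀ t ∈ Set.Icc (0:ℝ) 1, y t = ∫ s in (0:ℝ)..1, G t s * f s (y s)) →
        ∀ t ∈ Set.Icc (0:ℝ) 1, y t = x t := by
  have hfφ : ∀ s ∈ I, ∀ a b, |f s a - f s b| ≤ 9 * √3 * φ |a - b| := fun s hs =>
    Monotone.abs_sub_le_of_sub_le (ψ := fun r => 9 * √3 * φ r)
      (fun a b hab => sub_nonneg.mp (hK1 s hs a b hab).1)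
      fun a b hab => (hK1 s hs a b hab).2
  obtain ⟨x, hx, hx_unique⟩ :=
    IsMatkowski.existsUnique_isFixedPt hφMK (dist_greenOperatorOn_le hf hφmono hfφ)
  refine ⟨IccExtend zero_le_one x, x.continuous.Icc_extend', fun t ht => ?_,
    fun y hy hyfix t ht => ?_⟩
  · rw [IccExtend_of_mem _ _ ht]
    exact (DFunLike.congr_fun hx ⟨t, ht⟩).symm
  · rw [IccExtend_of_mem _ _ ht,
      ← hx_unique _ (isFixedPt_greenOperatorOn_restrict hf hy hyfix)]
    rfl

theorem stmt_19 (f : ℝ → ℝ → ℝ) (hf : Continuous fun p : ℝ × ℝ => f p.1 p.2)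
    (φ : ℝ → ℝ) (hφmono : MonotoneOn φ (Set.Ici 0))
    (hφnn : ∀ t : ℝ, 0 ≤ t → 0 ≤ φ t)
    (hφMK : ∀ ε > (0:ℝ), ∃ δ > (0:ℝ), ∀ t : ℝ, ε ≤ t → t < ε + δ → φ t < ε)
    (hK1 : ∀ t ∈ Set.Icc (0:ℝ) 1, ∀ a b : ℝ, a ≤ b →
      0 ≤ f t b - f t a ∧ f t b - f t a ≤ 9 * Real.sqrt 3 * φ (b - a))
    (hK2 : ∃ x₀ : ℝ → ℝ, Continuous x₀ ∧
      ∀ t ∈ Set.Icc (0:ℝ) 1, x₀ t ≤ ∫ s in (0:ℝ)..1, G t s * f s (x₀ s)) :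
    ∃ x : ℝ → ℝ, Continuous x ∧
      (∀ t ∈ Set.Icc (0:ℝ) 1, x t = ∫ s in (0:ℝ)..1, G t s * f s (x s)) ∧
      ∀ y : ℝ → ℝ, Continuous y →
        (∀ t ∈ Set.Icc (0:ℝ) 1, y t = ∫ s in (0:ℝ)..1, G t s * f s (y s)) →
        ∀ t ∈ Set.Icc (0:ℝ) 1, y t = x t :=
  stmt_19_general f hf φ hφmono hφMK hK1
end
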